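/- arXiv:1108.3207 — 4 statements merged into one kernel-verified Lean document; each statement's English description precedes it below -/
import Mathlib

section
/- Let $n$ be a positive integer, let $p \in (0,1)$, let $i$ be a positive integer with $i \le 2^{n-1}$, and let $r$ be such that $\sum_{j=r+1}^n \binom{n}{j} \le 2^{n-1}+i \le \sum_{j=r}^n \binom{n}{j}$. Then there exists a family $\mathcal{A}$ with $[n]^{(\geq r+1)} \subseteq \mathcal{A} \subseteq [n]^{(\geq r)}$ and $|\mathcal{A}| = 2^{n-1}+i$ such that for every family $\mathcal{B} \subseteq \mathcal{P}[n]$ with $|\mathcal{B}| = 2^{n-1}+i$, we have $\mathbb{P}(\mathcal{B}_p \text{ is intersecting}) \le \mathbb{P}(\mathcal{A}_p \text{ is intersecting})$. -/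
open Finset

/-- A family of finite sets is intersecting if any two members meet. -/
def IsIntersecting (𝓑 : Finset (Finset ℕ)) : Prop :=
  ∀ A ∈ 𝓑, ∀ B ∈ 𝓑, (A ∩ B).Nonempty

instance : DecidablePred IsIntersecting :=
  fun 𝓑 => decidable_of_iff (∀ A ∈ 𝓑, ∀ B ∈ 𝓑, (A ∩ B).Nonempty) Iff.rfl

/-- A family is `t`-intersecting if any two members meet in at least `t` elements. -/
def TIntersecting (t : ℕ) (𝓐 : Finset (Finset ℕ)) : Prop :=
  ∀ A ∈ 𝓐, ∀ B ∈ 𝓐, t ≤ (A ∩ B).card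

/-- The probability that the p-random subfamily of `𝓐` is intersecting. -/
noncomputable def probInter (p : ℝ) (𝓐 : Finset (Finset ℕ)) : ℝ :=
  ∑ 𝓑 ∈ 𝓐.powerset.filter IsIntersecting,
    p ^ 𝓑.card * (1 - p) ^ (𝓐.card - 𝓑.card)

/-- The number of intersecting subfamilies of `𝓐` of order `m`. -/
def numInter (𝓐 : Finset (Finset ℕ)) (m : ℕ) : ℕ :=
  ((𝓐.powerset.filter IsIntersecting).filter (fun 𝓑 => 𝓑.card = m)).card

/-- `[n]^{(≥ r)}`: all subsets of `[n] = {1,…,n}` of size at least `r`. -/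
def atLeast (n r : ℕ) : Finset (Finset ℕ) :=
  (Finset.Icc 1 n).powerset.filter (fun A => r ≤ A.card)

/-- `[n]^{(r)}`: all subsets of `[n] = {1,…,n}` of size exactly `r`. -/
def uniformFam (n r : ℕ) : Finset (Finset ℕ) :=
  Finset.powersetCard r (Finset.Icc 1 n)

/-- The `ij`-compression of a set. -/
def setCompress (i j : ℕ) (A : Finset ℕ) : Finset ℕ :=
  if j ∈ A ∧ i ∉ A then insert i (A.erase j) else A

/-- The `ij`-compression of a family. -/
def famCompress (i j : ℕ) (𝓐 : Finset (Finset ℕ)) : Finset (Finset ℕ) :=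
  𝓐.image (setCompress i j) ∪ 𝓐.filter (fun A => setCompress i j A ∈ 𝓐)

/-- A family is left-compressed if it is `ij`-compressed for all `i < j` in `[n]`. -/
def LeftCompressed (n : ℕ) (𝓐 : Finset (Finset ℕ)) : Prop :=
  ∀ i j : ℕ, 1 ≤ i → i < j → j ≤ n → famCompress i j 𝓐 = 𝓐

/-- The `UV`-compression of a set. -/
def setUV (U V A : Finset ℕ) : Finset ℕ :=
  if V ⊆ A ∧ Disjoint U A then (A ∪ U) \ V else A

/-- The `UV`-compression of a family. -/
def famUV (U V : Finset ℕ) (𝓐 : Finset (Finset ℕ)) : Finset (Finset ℕ) :=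
  𝓐.image (setUV U V) ∪ 𝓐.filter (fun A => setUV U V A ∈ 𝓐)

/-- `f` is a pairing function on `U`: an involution on `U` with no fixed point. -/
def IsPairing (f : ℕ → ℕ) (U : Finset ℕ) : Prop :=
  (∀ x ∈ U, f x ∈ U) ∧ (∀ x ∈ U, f (f x) = x) ∧ (∀ x ∈ U, f x ≠ x)

/-- The `(U,v,f)`-compression of a set. -/
def setUvf (U : Finset ℕ) (v : ℕ) (f : ℕ → ℕ) (A : Finset ℕ) : Finset ℕ :=
  if v ∈ A then A else (A ∩ U).image f ∪ {v} ∪ (A \ U)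

/-- The `(U,v,f)`-compression of a family. -/
def famUvf (U : Finset ℕ) (v : ℕ) (f : ℕ → ℕ) (𝓐 : Finset (Finset ℕ)) : Finset (Finset ℕ) :=
  𝓐.image (setUvf U v f) ∪ 𝓐.filter (fun A => setUvf U v f A ∈ 𝓐)

/-!
Among all families of `2 ^ (n - 1) + i` subsets of `[n]`, take one that maximises the probability
of being intersecting and, among those, the total size of its members. A pivot compression `σ`
with pivot `v` (the paper's `(U, v, f)`-compressions and the insertions `A ↦ A ∪ {v}`) never
decreases that probability: an intersecting subfamily `𝓒` is sent injectively, with the same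
size, to an intersecting subfamily of the compressed family by applying `σ` to its cascade — the
members that `σ` moves out of the family, closed under adding members of `𝓒` disjoint from the
image of a cascade member. A compression that moves a member strictly increases the total size,
so the maximiser is stable under all of them. Insertions make it an up-set, and an involution
swapping `A \ B` with `B \ A` turns any `A` with `|B| = |A| + 1` into `B`, so once the family
contains a set of size `k` it contains every set of size at least `k + 1`; counting then squeezes
it between `[n]^(≥ r + 1)` and `[n]^(≥ r)`.
-/

structure IsPivotCompression (σ : Finset ℕ → Finset ℕ) (v : ℕ) : Prop where
  pivot_mem : ∀ A, v ∈ σ A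
  eq_self : ∀ A, v ∈ A → σ A = A
  injOn : Set.InjOn σ {A | v ∉ A}
  meets : ∀ A B, (A ∩ B).Nonempty → (A ∩ σ B).Nonempty → (σ A ∩ B).Nonempty

def movedBy (σ : Finset ℕ → Finset ℕ) (𝓜 : Finset (Finset ℕ)) : Finset (Finset ℕ) :=
  𝓜.filter (fun A => σ A ∉ 𝓜)

def compressFamily (σ : Finset ℕ → Finset ℕ) (𝓜 : Finset (Finset ℕ)) : Finset (Finset ℕ) :=
  𝓜.filter (fun A => σ A ∈ 𝓜) ∪ (movedBy σ 𝓜).image σ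

/-- The members of `𝓒` to which `σ` is applied: besides those `σ` moves out of `𝓜`, any member
disjoint from the image of one of them, or the compressed subfamily would not be intersecting. -/
inductive InCascade (σ : Finset ℕ → Finset ℕ) (𝓜 𝓒 : Finset (Finset ℕ)) : Finset ℕ → Prop
  | seed {A} : A ∈ 𝓒 → σ A ∉ 𝓜 → InCascade σ 𝓜 𝓒 A
  | step {A Q} : A ∈ 𝓒 → InCascade σ 𝓜 𝓒 Q → Disjoint (σ Q) A → InCascade σ 𝓜 𝓒 A

open Classical in
noncomputable def cascade (σ : Finset ℕ → Finset ℕ) (𝓜 𝓒 : Finset (Finset ℕ)) :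
    Finset (Finset ℕ) :=
  𝓒.filter (InCascade σ 𝓜 𝓒)

noncomputable def cascadeCompress (σ : Finset ℕ → Finset ℕ) (𝓜 𝓒 : Finset (Finset ℕ)) :
    Finset (Finset ℕ) :=
  (𝓒 \ cascade σ 𝓜 𝓒) ∪ (cascade σ 𝓜 𝓒).image σ

section Cascade

variable {σ : Finset ℕ → Finset ℕ} {v : ℕ} {𝓜 𝓒 𝓓 : Finset (Finset ℕ)} {A : Finset ℕ}

theorem InCascade.mem (hA : InCascade σ 𝓜 𝓒 A) : A ∈ 𝓒 := by
  cases hA <;> assumption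

theorem mem_cascade : A ∈ cascade σ 𝓜 𝓒 ↔ InCascade σ 𝓜 𝓒 A := by
  classical
  exact ⟨fun h => (mem_filter.mp h).2, fun h => mem_filter.mpr ⟨h.mem, h⟩⟩

theorem cascade_subset : cascade σ 𝓜 𝓒 ⊆ 𝓒 := fun _ h => (mem_cascade.mp h).mem

namespace IsPivotCompression

theorem pivot_notMem_of_inCascade (hσ : IsPivotCompression σ v) (h𝓒 : 𝓒 ⊆ 𝓜)
    (hA : InCascade σ 𝓜 𝓒 A) : v ∉ A := by
  cases hA with
  | seed hA hσA => exact fun hv => hσA ((hσ.eq_self A hv).symm ▸ h𝓒 hA)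
  | step _ _ hQA => exact fun hv => disjoint_left.mp hQA (hσ.pivot_mem _) hv

theorem not_disjoint_image (hσ : IsPivotCompression σ v) {Q : Finset ℕ}
    (hQA : (Q ∩ A).Nonempty) (hQσA : (Q ∩ σ A).Nonempty) : ¬Disjoint (σ Q) A :=
  not_disjoint_iff_nonempty_inter.mpr (hσ.meets Q A hQA hQσA)

theorem image_notMem_of_inCascade (hσ : IsPivotCompression σ v) (h𝓒 : 𝓒 ⊆ 𝓜)
    (hint : IsIntersecting 𝓒) (hA : InCascade σ 𝓜 𝓒 A) : σ A ∉ 𝓒 := by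
  intro hσA
  cases hA with
  | seed _ hσA' => exact hσA' (h𝓒 hσA)
  | step hA𝓒 hQ hQA =>
    exact hσ.not_disjoint_image (hint _ hQ.mem _ hA𝓒) (hint _ hQ.mem _ hσA) hQA

theorem image_injOn_cascade (hσ : IsPivotCompression σ v) (h𝓒 : 𝓒 ⊆ 𝓜) :
    Set.InjOn σ (cascade σ 𝓜 𝓒) := fun _ hA _ hB hAB =>
  hσ.injOn (hσ.pivot_notMem_of_inCascade h𝓒 (mem_cascade.mp hA))
    (hσ.pivot_notMem_of_inCascade h𝓒 (mem_cascade.mp hB)) hAB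

theorem card_cascadeCompress (hσ : IsPivotCompression σ v) (h𝓒 : 𝓒 ⊆ 𝓜)
    (hint : IsIntersecting 𝓒) : (cascadeCompress σ 𝓜 𝓒).card = 𝓒.card := by
  have hdisj : Disjoint (𝓒 \ cascade σ 𝓜 𝓒) ((cascade σ 𝓜 𝓒).image σ) := by
    rw [disjoint_right]
    intro X hX hX'
    obtain ⟨A, hA, rfl⟩ := mem_image.mp hX
    exact hσ.image_notMem_of_inCascade h𝓒 hint (mem_cascade.mp hA) (mem_sdiff.mp hX').1
  rw [cascadeCompress, card_union_of_disjoint hdisj,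
    card_image_of_injOn (hσ.image_injOn_cascade h𝓒), card_sdiff_add_card_eq_card cascade_subset]

end IsPivotCompression

theorem InCascade.image_meets_of_not_inCascade {Q : Finset ℕ} (hQ : InCascade σ 𝓜 𝓒 Q)
    (hA : A ∈ 𝓒) (hA' : ¬InCascade σ 𝓜 𝓒 A) : (σ Q ∩ A).Nonempty :=
  not_disjoint_iff_nonempty_inter.mp fun h => hA' (.step hA hQ h)

theorem InCascade.image_mem_cascadeCompress (hA : InCascade σ 𝓜 𝓒 A) :
    σ A ∈ cascadeCompress σ 𝓜 𝓒 :=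
  mem_union_right _ (mem_image_of_mem σ (mem_cascade.mpr hA))

namespace IsPivotCompression

theorem isIntersecting_cascadeCompress (hσ : IsPivotCompression σ v) (hint : IsIntersecting 𝓒) :
    IsIntersecting (cascadeCompress σ 𝓜 𝓒) := by
  intro X hX Y hY
  simp only [cascadeCompress, mem_union, mem_sdiff, mem_image, mem_cascade] at hX hY
  rcases hX with ⟨hX, hX'⟩ | ⟨Q, hQ, rfl⟩ <;> rcases hY with ⟨hY, hY'⟩ | ⟨Q', hQ', rfl⟩
  · exact hint X hX Y hY
  · rw [inter_comm]
    exact hQ'.image_meets_of_not_inCascade hX hX'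
  · exact hQ.image_meets_of_not_inCascade hY hY'
  · exact ⟨v, mem_inter.mpr ⟨hσ.pivot_mem Q, hσ.pivot_mem Q'⟩⟩

theorem cascadeCompress_subset (hσ : IsPivotCompression σ v) (h𝓒 : 𝓒 ⊆ 𝓜) :
    cascadeCompress σ 𝓜 𝓒 ⊆ compressFamily σ 𝓜 := by
  intro X hX
  simp only [cascadeCompress, mem_union, mem_sdiff, mem_image, mem_cascade] at hX
  simp only [compressFamily, movedBy, mem_union, mem_filter, mem_image]
  rcases hX with ⟨hX, hX'⟩ | ⟨A, hA, rfl⟩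
  · exact Or.inl ⟨h𝓒 hX, not_not.mp fun h => hX' (.seed hX h)⟩
  · by_cases h : σ A ∈ 𝓜
    · exact Or.inl ⟨h, by rwa [hσ.eq_self _ (hσ.pivot_mem A)]⟩
    · exact Or.inr ⟨A, ⟨h𝓒 hA.mem, h⟩, rfl⟩

theorem image_mem_or_inCascade (hσ : IsPivotCompression σ v) (h𝓓 : 𝓓 ⊆ 𝓜) (hvA : v ∉ A)
    (h : σ A ∈ cascadeCompress σ 𝓜 𝓓) : σ A ∈ 𝓓 ∨ InCascade σ 𝓜 𝓓 A := by
  simp only [cascadeCompress, mem_union, mem_sdiff, mem_image, mem_cascade] at h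
  rcases h with h | ⟨B, hB, hBA⟩
  · exact Or.inl h.1
  · exact Or.inr (hσ.injOn (hσ.pivot_notMem_of_inCascade h𝓓 hB) hvA hBA ▸ hB)

theorem inCascade_of_cascadeCompress_eq (hσ : IsPivotCompression σ v) (h𝓒 : 𝓒 ⊆ 𝓜)
    (h𝓓 : 𝓓 ⊆ 𝓜) (hint𝓒 : IsIntersecting 𝓒) (hint𝓓 : IsIntersecting 𝓓)
    (heq : cascadeCompress σ 𝓜 𝓒 = cascadeCompress σ 𝓜 𝓓) (hA : InCascade σ 𝓜 𝓒 A) :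
    InCascade σ 𝓜 𝓓 A := by
  have of_image_not_mem {B} (hB : InCascade σ 𝓜 𝓒 B) (hσB : σ B ∉ 𝓓) : InCascade σ 𝓜 𝓓 B :=
    (hσ.image_mem_or_inCascade h𝓓 (hσ.pivot_notMem_of_inCascade h𝓒 hB)
      (heq ▸ hB.image_mem_cascadeCompress)).resolve_left hσB
  induction hA with
  | seed hA𝓒 hσA => exact of_image_not_mem (.seed hA𝓒 hσA) fun h => hσA (h𝓓 h)
  | step hA𝓒 hQ hQA ih =>
    -- `Q` lies in both families, so it meets `A` and `σ A`; hence `σ Q` meets `A`.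
    exact of_image_not_mem (.step hA𝓒 hQ hQA) fun h =>
      hσ.not_disjoint_image (hint𝓒 _ hQ.mem _ hA𝓒) (hint𝓓 _ ih.mem _ h) hQA

theorem subset_of_cascadeCompress_eq (hσ : IsPivotCompression σ v) (h𝓒 : 𝓒 ⊆ 𝓜)
    (h𝓓 : 𝓓 ⊆ 𝓜) (hint𝓒 : IsIntersecting 𝓒) (hint𝓓 : IsIntersecting 𝓓)
    (heq : cascadeCompress σ 𝓜 𝓒 = cascadeCompress σ 𝓜 𝓓) : 𝓒 ⊆ 𝓓 := by
  intro A hA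
  by_cases hAc : InCascade σ 𝓜 𝓒 A
  · exact (hσ.inCascade_of_cascadeCompress_eq h𝓒 h𝓓 hint𝓒 hint𝓓 heq hAc).mem
  have hA' : A ∈ cascadeCompress σ 𝓜 𝓓 :=
    heq ▸ mem_union_left _ (mem_sdiff.mpr ⟨hA, mt mem_cascade.mp hAc⟩)
  simp only [cascadeCompress, mem_union, mem_sdiff, mem_image, mem_cascade] at hA'
  rcases hA' with ⟨hA𝓓, -⟩ | ⟨B, hB, rfl⟩
  · exact hA𝓓
  · have hB𝓒 := hσ.inCascade_of_cascadeCompress_eq h𝓓 h𝓒 hint𝓓 hint𝓒 heq.symm hB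
    exact absurd hA (hσ.image_notMem_of_inCascade h𝓒 hint𝓒 hB𝓒)

theorem cascadeCompress_injOn (hσ : IsPivotCompression σ v) :
    Set.InjOn (cascadeCompress σ 𝓜) {𝓒 | 𝓒 ⊆ 𝓜 ∧ IsIntersecting 𝓒} :=
  fun _ ⟨h𝓒, hint𝓒⟩ _ ⟨h𝓓, hint𝓓⟩ heq =>
    (hσ.subset_of_cascadeCompress_eq h𝓒 h𝓓 hint𝓒 hint𝓓 heq).antisymm
      (hσ.subset_of_cascadeCompress_eq h𝓓 h𝓒 hint𝓓 hint𝓒 heq.symm)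

end IsPivotCompression

end Cascade
theorem probInter_le_of_injOn {p : ℝ} (hp0 : 0 ≤ p) (hp1 : p ≤ 1) {𝓐 𝓑 : Finset (Finset ℕ)}
    (hcard : 𝓐.card = 𝓑.card) (φ : Finset (Finset ℕ) → Finset (Finset ℕ))
    (hφ : ∀ 𝓒 ⊆ 𝓐, IsIntersecting 𝓒 →
      φ 𝓒 ⊆ 𝓑 ∧ IsIntersecting (φ 𝓒) ∧ (φ 𝓒).card = 𝓒.card)
    (hinj : Set.InjOn φ {𝓒 | 𝓒 ⊆ 𝓐 ∧ IsIntersecting 𝓒}) :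
    probInter p 𝓐 ≤ probInter p 𝓑 := by
  set w : Finset (Finset ℕ) → ℝ := fun 𝓒 => p ^ 𝓒.card * (1 - p) ^ (𝓑.card - 𝓒.card)
  have hmem : ∀ 𝓒 ∈ 𝓐.powerset.filter IsIntersecting, 𝓒 ⊆ 𝓐 ∧ IsIntersecting 𝓒 :=
    fun 𝓒 h => by rwa [mem_filter, mem_powerset] at h
  calc probInter p 𝓐 = ∑ 𝓒 ∈ 𝓐.powerset.filter IsIntersecting, w (φ 𝓒) := by
        rw [probInter, hcard]
        refine sum_congr rfl fun 𝓒 h𝓒 => ?_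
        simp only [w, (hφ 𝓒 (hmem 𝓒 h𝓒).1 (hmem 𝓒 h𝓒).2).2.2]
    _ = ∑ 𝓒 ∈ (𝓐.powerset.filter IsIntersecting).image φ, w 𝓒 :=
        (sum_image fun 𝓒 h𝓒 𝓓 h𝓓 => hinj (hmem 𝓒 h𝓒) (hmem 𝓓 h𝓓)).symm
    _ ≤ probInter p 𝓑 := by
        refine sum_le_sum_of_subset_of_nonneg (image_subset_iff.mpr fun 𝓒 h𝓒 => ?_)
          fun _ _ _ => mul_nonneg (pow_nonneg hp0 _) (pow_nonneg (sub_nonneg.mpr hp1) _)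
        obtain ⟨hsub, hint, -⟩ := hφ 𝓒 (hmem 𝓒 h𝓒).1 (hmem 𝓒 h𝓒).2
        exact mem_filter.mpr ⟨mem_powerset.mpr hsub, hint⟩

namespace IsPivotCompression

variable {σ : Finset ℕ → Finset ℕ} {v : ℕ} {𝓜 : Finset (Finset ℕ)}

theorem pivot_notMem_of_mem_movedBy (hσ : IsPivotCompression σ v) {A : Finset ℕ}
    (hA : A ∈ movedBy σ 𝓜) : v ∉ A := fun hv =>
  (mem_filter.mp hA).2 ((hσ.eq_self A hv).symm ▸ (mem_filter.mp hA).1)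

theorem injOn_movedBy (hσ : IsPivotCompression σ v) : Set.InjOn σ (movedBy σ 𝓜) :=
  fun _ hA _ hB => hσ.injOn (hσ.pivot_notMem_of_mem_movedBy hA)
    (hσ.pivot_notMem_of_mem_movedBy hB)

theorem sum_compressFamily (hσ : IsPivotCompression σ v) {M : Type*} [AddCommMonoid M]
    (g : Finset ℕ → M) :
    ∑ X ∈ compressFamily σ 𝓜, g X = ∑ A ∈ 𝓜.filter (fun A => σ A ∈ 𝓜), g A +
      ∑ A ∈ movedBy σ 𝓜, g (σ A) := by
  have hdisj : Disjoint (𝓜.filter (fun A => σ A ∈ 𝓜)) ((movedBy σ 𝓜).image σ) := by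
    rw [disjoint_right]
    intro X hX hX'
    obtain ⟨A, hA, rfl⟩ := mem_image.mp hX
    exact (mem_filter.mp hA).2 (mem_filter.mp hX').1
  rw [compressFamily, sum_union hdisj, sum_image hσ.injOn_movedBy]

theorem card_compressFamily (hσ : IsPivotCompression σ v) :
    (compressFamily σ 𝓜).card = 𝓜.card := by
  simp only [card_eq_sum_ones, hσ.sum_compressFamily, movedBy, sum_filter_add_sum_filter_not]

theorem sum_card_compressFamily (hσ : IsPivotCompression σ v)
    (hsize : ∀ A, v ∉ A → (σ A).card = A.card + 1) :
    ∑ X ∈ compressFamily σ 𝓜, X.card = ∑ X ∈ 𝓜, X.card + (movedBy σ 𝓜).card := by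
  rw [hσ.sum_compressFamily, sum_congr rfl fun A hA => hsize A (hσ.pivot_notMem_of_mem_movedBy hA),
    sum_add_distrib, card_eq_sum_ones, ← add_assoc, movedBy, sum_filter_add_sum_filter_not]

theorem probInter_le_probInter_compressFamily (hσ : IsPivotCompression σ v) {p : ℝ}
    (hp0 : 0 ≤ p) (hp1 : p ≤ 1) : probInter p 𝓜 ≤ probInter p (compressFamily σ 𝓜) :=
  probInter_le_of_injOn hp0 hp1 hσ.card_compressFamily.symm (cascadeCompress σ 𝓜)
    (fun _ h𝓒 hint => ⟨hσ.cascadeCompress_subset h𝓒, hσ.isIntersecting_cascadeCompress hint,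
      hσ.card_cascadeCompress h𝓒 hint⟩) hσ.cascadeCompress_injOn

end IsPivotCompression

def pivotCompress (π : ℕ → ℕ) (v : ℕ) (A : Finset ℕ) : Finset ℕ :=
  if v ∈ A then A else insert v (A.image π)

section PivotCompress

open Function

variable {π : ℕ → ℕ} {v : ℕ} {A : Finset ℕ}

theorem mem_image_iff_of_involutive (hπ : Involutive π) {s : Finset ℕ} {y : ℕ} :
    y ∈ s.image π ↔ π y ∈ s :=
  ⟨fun h => by obtain ⟨x, hx, rfl⟩ := mem_image.mp h; rwa [hπ x], fun h => mem_image.mpr ⟨π y, h, hπ y⟩⟩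

theorem pivotCompress_of_notMem (hA : v ∉ A) : pivotCompress π v A = insert v (A.image π) :=
  if_neg hA

theorem pivot_notMem_image (hπ : Injective π) (hv : π v = v) (hA : v ∉ A) : v ∉ A.image π := by
  intro h
  obtain ⟨x, hx, hxv⟩ := mem_image.mp h
  exact hA (hπ (hxv.trans hv.symm) ▸ hx)

theorem isPivotCompression_pivotCompress (hπ : Involutive π) (hv : π v = v) :
    IsPivotCompression (pivotCompress π v) v where
  pivot_mem A := by
    unfold pivotCompress
    split_ifs with h
    exacts [h, mem_insert_self v _]
  eq_self _ h := if_pos h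
  injOn A hA B hB h := by
    rw [pivotCompress_of_notMem hA, pivotCompress_of_notMem hB] at h
    have h' := congrArg (·.erase v) h
    simp only [erase_insert (pivot_notMem_image hπ.injective hv hA),
      erase_insert (pivot_notMem_image hπ.injective hv hB)] at h'
    exact image_injective hπ.injective h'
  meets A B hAB hAσB := by
    by_cases hvA : v ∈ A
    · rwa [pivotCompress, if_pos hvA]
    by_cases hvB : v ∈ B
    · refine ⟨v, mem_inter.mpr ⟨?_, hvB⟩⟩
      rw [pivotCompress_of_notMem hvA]
      exact mem_insert_self v _
    obtain ⟨y, hy⟩ := hAσB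
    rw [mem_inter, pivotCompress_of_notMem hvB, mem_insert, mem_image_iff_of_involutive hπ] at hy
    rcases hy with ⟨hyA, rfl | hyB⟩
    · exact absurd hyA hvA
    · refine ⟨π y, mem_inter.mpr ⟨?_, hyB⟩⟩
      rw [pivotCompress_of_notMem hvA]
      exact mem_insert_of_mem (mem_image_of_mem π hyA)

theorem card_pivotCompress (hπ : Injective π) (hv : π v = v) (hA : v ∉ A) :
    (pivotCompress π v A).card = A.card + 1 := by
  rw [pivotCompress_of_notMem hA, card_insert_of_notMem (pivot_notMem_image hπ hv hA),
    card_image_of_injective _ hπ]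

theorem pivotCompress_subset {G : Finset ℕ} (hvG : v ∈ G) (hπG : ∀ x ∈ G, π x ∈ G)
    (hA : A ⊆ G) : pivotCompress π v A ⊆ G := by
  unfold pivotCompress
  split_ifs
  exacts [hA, insert_subset hvG (image_subset_iff.mpr fun x hx => hπG x (hA hx))]

theorem pivotCompress_id : pivotCompress id v A = insert v A := by
  unfold pivotCompress
  split_ifs with h
  exacts [(insert_eq_of_mem h).symm, by rw [image_id]]

theorem exists_involutive_swap {D E : Finset ℕ} (hDE : Disjoint D E) (hcard : D.card = E.card) :
    ∃ π : ℕ → ℕ, Involutive π ∧ (∀ x ∈ D, π x ∈ E) ∧ (∀ x ∈ E, π x ∈ D) ∧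
      ∀ x, x ∉ D → x ∉ E → π x = x := by
  let e := equivOfCardEq hcard
  refine ⟨fun x => if hx : x ∈ D then e ⟨x, hx⟩ else if hx : x ∈ E then e.symm ⟨x, hx⟩ else x,
    fun x => ?_, fun x hx => by simp [hx], fun x hx => ?_, fun x hD hE => by simp [hD, hE]⟩
  · by_cases hD : x ∈ D
    · simp [hD, disjoint_right.mp hDE (e ⟨x, hD⟩).2]
    by_cases hE : x ∈ E
    · simp [hD, hE]
    · simp [hD, hE]
  · simp [disjoint_right.mp hDE hx, hx]

end PivotCompress

theorem exists_pivotCompress_eq {A B : Finset ℕ} (hAB : B.card = A.card + 1) :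
    ∃ π v, Function.Involutive π ∧ π v = v ∧ v ∈ B ∧ pivotCompress π v A = B ∧
      ∀ x, π x = x ∨ π x ∈ A ∪ B := by
  obtain ⟨v, hvB, hvA⟩ := exists_mem_notMem_of_card_lt_card (s := A) (t := B) (by omega)
  set B' := B.erase v
  have hcard : (A \ B').card = (B' \ A).card := by
    have hA := card_sdiff_add_card_inter A B'
    have hB' := card_sdiff_add_card_inter B' A
    rw [inter_comm, card_erase_of_mem hvB] at hB'
    omega
  obtain ⟨π, hπ, hDE, hED, hfix⟩ := exists_involutive_swap disjoint_sdiff_sdiff hcard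
  have hv : π v = v := hfix v (fun h => hvA (mem_sdiff.mp h).1) fun h => by simp [B'] at h
  -- `π` swaps `A \ B'` with `B' \ A` and fixes `A ∩ B'`, so it carries `A` onto `B'`.
  have himage : A.image π = B' := by
    ext y
    rw [mem_image_iff_of_involutive hπ]
    by_cases hD : y ∈ A \ B'
    · exact iff_of_false (mem_sdiff.mp (hDE y hD)).2 (mem_sdiff.mp hD).2
    by_cases hE : y ∈ B' \ A
    · exact iff_of_true (mem_sdiff.mp (hED y hE)).1 (mem_sdiff.mp hE).1
    rw [hfix y hD hE]
    simp only [mem_sdiff, not_and_not_right] at hD hE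
    exact ⟨hD, hE⟩
  refine ⟨π, v, hπ, hv, hvB, ?_, fun x => ?_⟩
  · rw [pivotCompress_of_notMem hvA, himage, insert_erase hvB]
  by_cases hD : x ∈ A \ B'
  · exact Or.inr (mem_union_right _ (mem_of_mem_erase (mem_sdiff.mp (hDE x hD)).1))
  by_cases hE : x ∈ B' \ A
  · exact Or.inr (mem_union_left _ (mem_sdiff.mp (hED x hE)).1)
  exact Or.inl (hfix x hD hE)

section UpClosed

variable {n r : ℕ} {G : Finset ℕ} {𝓜 : Finset (Finset ℕ)}

theorem card_atLeast (n s : ℕ) : (atLeast n s).card = ∑ j ∈ Icc s n, n.choose j := by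
  have hG : (Icc 1 n).card = n := by simp
  have heq : atLeast n s = (Icc s n).biUnion (fun j => powersetCard j (Icc 1 n)) := by
    ext A
    simp only [atLeast, mem_filter, mem_powerset, mem_biUnion, mem_Icc, mem_powersetCard]
    constructor
    · rintro ⟨hA, hs⟩
      exact ⟨A.card, ⟨hs, hG ▸ card_le_card hA⟩, hA, rfl⟩
    · rintro ⟨j, ⟨hj, -⟩, hA, rfl⟩
      exact ⟨hA, hj⟩
  rw [heq, card_biUnion]
  · exact sum_congr rfl fun j _ => by rw [card_powersetCard, hG]
  · intro j _ k _ hjk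
    exact disjoint_left.mpr fun A hj hk =>
      hjk ((mem_powersetCard.mp hj).2.symm.trans (mem_powersetCard.mp hk).2)

theorem atLeast_subset_atLeast {s t : ℕ} (h : t ≤ s) : atLeast n s ⊆ atLeast n t :=
  fun _ hA => mem_filter.mpr ⟨(mem_filter.mp hA).1, h.trans (mem_filter.mp hA).2⟩

theorem mem_of_insert_closed (hup : ∀ A ∈ 𝓜, ∀ x ∈ G, insert x A ∈ 𝓜) {A X : Finset ℕ}
    (hA : A ∈ 𝓜) (hAX : A ⊆ X) (hXG : X ⊆ G) : X ∈ 𝓜 := by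
  have key : ∀ s ⊆ G, A ∪ s ∈ 𝓜 := by
    intro s
    induction s using Finset.induction_on with
    | empty => simpa using hA
    | insert a s _ ih =>
      intro hs
      rw [union_insert]
      exact hup _ (ih ((subset_insert a s).trans hs)) a (hs (mem_insert_self a s))
  simpa [union_eq_right.mpr hAX] using key X hXG

theorem atLeast_subset_of_insert_closed (hup : ∀ A ∈ 𝓜, ∀ x ∈ Icc 1 n, insert x A ∈ 𝓜) {k : ℕ}
    (hk : ∀ B ⊆ Icc 1 n, B.card = k → B ∈ 𝓜) : atLeast n k ⊆ 𝓜 := by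
  intro X hX
  rw [atLeast, mem_filter, mem_powerset] at hX
  obtain ⟨Y, hYX, hYk⟩ := exists_subset_card_eq hX.2
  exact mem_of_insert_closed hup (hk Y (hYX.trans hX.1) hYk) hYX hX.1

theorem sandwiched_of_insert_closed (h𝓜 : 𝓜 ⊆ (Icc 1 n).powerset)
    (hup : ∀ A ∈ 𝓜, ∀ x ∈ Icc 1 n, insert x A ∈ 𝓜)
    (hgap : ∀ A ∈ 𝓜, ∀ B ⊆ Icc 1 n, B.card = A.card + 1 → B ∈ 𝓜)
    (hc1 : (atLeast n (r + 1)).card ≤ 𝓜.card) (hc2 : 𝓜.card ≤ (atLeast n r).card) :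
    atLeast n (r + 1) ⊆ 𝓜 ∧ 𝓜 ⊆ atLeast n r := by
  have habove : ∀ A ∈ 𝓜, atLeast n (A.card + 1) ⊆ 𝓜 :=
    fun A hA => atLeast_subset_of_insert_closed hup (hgap A hA)
  have hlower : 𝓜 ⊆ atLeast n r := by
    intro A hA
    refine mem_filter.mpr ⟨h𝓜 hA, not_lt.mp fun hAr => ?_⟩
    have hA' : A ∉ atLeast n (A.card + 1) := fun h => by simp [atLeast] at h
    have := calc
      (atLeast n r).card ≤ (atLeast n (A.card + 1)).card :=
        card_le_card (atLeast_subset_atLeast hAr)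
      _ < 𝓜.card := card_lt_card ((ssubset_iff_of_subset (habove A hA)).mpr ⟨A, hA, hA'⟩)
    omega
  refine ⟨?_, hlower⟩
  by_cases h : ∃ A ∈ 𝓜, A.card ≤ r
  · obtain ⟨A, hA, hAr⟩ := h
    have hAr' : A.card = r := le_antisymm hAr (mem_filter.mp (hlower hA)).2
    exact hAr' ▸ habove A hA
  · push Not at h
    have hsub : 𝓜 ⊆ atLeast n (r + 1) := fun A hA => mem_filter.mpr ⟨h𝓜 hA, h A hA⟩
    exact (eq_of_subset_of_card_le hsub hc1).ge

end UpClosed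

noncomputable def probSizeLex (p : ℝ) (𝓑 : Finset (Finset ℕ)) : ℝ ×ₗ ℕ :=
  toLex (probInter p 𝓑, ∑ X ∈ 𝓑, X.card)

theorem pivotCompress_mem_of_maximal {p : ℝ} (hp0 : 0 ≤ p) (hp1 : p ≤ 1) {G : Finset ℕ}
    {𝓜 : Finset (Finset ℕ)} (h𝓜 : 𝓜 ⊆ G.powerset)
    (hmax : ∀ 𝓑 ⊆ G.powerset, 𝓑.card = 𝓜.card → probSizeLex p 𝓑 ≤ probSizeLex p 𝓜)
    (π : ℕ → ℕ) (v : ℕ) (hπ : Function.Involutive π) (hv : π v = v) (hvG : v ∈ G)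
    (hπG : ∀ x ∈ G, π x ∈ G) {A : Finset ℕ} (hA : A ∈ 𝓜) : pivotCompress π v A ∈ 𝓜 := by
  by_contra hσA
  have hσ := isPivotCompression_pivotCompress hπ hv
  have hsub : compressFamily (pivotCompress π v) 𝓜 ⊆ G.powerset := by
    intro X hX
    rcases mem_union.mp hX with hX | hX
    · exact h𝓜 (mem_filter.mp hX).1
    · obtain ⟨B, hB, rfl⟩ := mem_image.mp hX
      exact mem_powerset.mpr
        (pivotCompress_subset hvG hπG (mem_powerset.mp (h𝓜 (mem_filter.mp hB).1)))
  have hsize : ∑ X ∈ 𝓜, X.card < ∑ X ∈ compressFamily (pivotCompress π v) 𝓜, X.card := by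
    rw [hσ.sum_card_compressFamily fun B hB => card_pivotCompress hπ.injective hv hB]
    exact Nat.lt_add_of_pos_right (card_pos.mpr ⟨A, mem_filter.mpr ⟨hA, hσA⟩⟩)
  exact not_le.mpr (Prod.Lex.toLex_strictMono (Prod.mk_lt_mk_of_le_of_lt
    (hσ.probInter_le_probInter_compressFamily hp0 hp1) hsize))
    (hmax _ hsub hσ.card_compressFamily)

theorem stmt1_general (n i r : ℕ)
    (hr1 : ∑ j ∈ Finset.Icc (r + 1) n, n.choose j ≤ 2 ^ (n - 1) + i)
    (hr2 : 2 ^ (n - 1) + i ≤ ∑ j ∈ Finset.Icc r n, n.choose j)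
    (p : ℝ) (hp0 : 0 < p) (hp1 : p < 1) :
    ∃ 𝓐 : Finset (Finset ℕ),
      atLeast n (r + 1) ⊆ 𝓐 ∧ 𝓐 ⊆ atLeast n r ∧ 𝓐.card = 2 ^ (n - 1) + i ∧
      ∀ 𝓑 : Finset (Finset ℕ), 𝓑 ⊆ (Finset.Icc 1 n).powerset →
        𝓑.card = 2 ^ (n - 1) + i → probInter p 𝓑 ≤ probInter p 𝓐 := by
  rw [← card_atLeast] at hr1 hr2
  set G := Icc 1 n
  set 𝒞 := G.powerset.powerset.filter (fun 𝓑 => 𝓑.card = 2 ^ (n - 1) + i)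
  have h𝒞 : ∀ 𝓑, 𝓑 ∈ 𝒞 ↔ 𝓑 ⊆ G.powerset ∧ 𝓑.card = 2 ^ (n - 1) + i := by
    simp [𝒞]
  have h𝒞ne : 𝒞.Nonempty := by
    obtain ⟨𝓑, h𝓑, h𝓑card⟩ := exists_subset_card_eq hr2
    exact ⟨𝓑, (h𝒞 𝓑).mpr ⟨h𝓑.trans (filter_subset _ _), h𝓑card⟩⟩
  obtain ⟨𝓜, h𝓜𝒞, hmax⟩ := exists_max_image 𝒞 (probSizeLex p) h𝒞ne
  obtain ⟨h𝓜, h𝓜card⟩ := (h𝒞 𝓜).mp h𝓜𝒞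
  have hmax' : ∀ 𝓑 ⊆ G.powerset, 𝓑.card = 𝓜.card → probSizeLex p 𝓑 ≤ probSizeLex p 𝓜 :=
    fun 𝓑 h𝓑 h𝓑card => hmax 𝓑 ((h𝒞 𝓑).mpr ⟨h𝓑, h𝓑card.trans h𝓜card⟩)
  have hstable := pivotCompress_mem_of_maximal hp0.le hp1.le h𝓜 hmax'
  have hup : ∀ A ∈ 𝓜, ∀ x ∈ G, insert x A ∈ 𝓜 := fun A hA x hx =>
    pivotCompress_id (v := x) ▸ hstable id x (fun _ => rfl) rfl hx (fun _ h => h) hA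
  have hgap : ∀ A ∈ 𝓜, ∀ B ⊆ G, B.card = A.card + 1 → B ∈ 𝓜 := by
    intro A hA B hBG hAB
    obtain ⟨π, v, hπ, hv, hvB, hπAB, hπloc⟩ := exists_pivotCompress_eq hAB
    have hAG := mem_powerset.mp (h𝓜 hA)
    refine hπAB ▸ hstable π v hπ hv (hBG hvB) (fun x hx => ?_) hA
    exact (hπloc x).elim (fun h => by rwa [h]) fun h => union_subset hAG hBG h
  obtain ⟨hlow, hhigh⟩ := sandwiched_of_insert_closed h𝓜 hup hgap
    (h𝓜card ▸ hr1) (h𝓜card ▸ hr2)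
  refine ⟨𝓜, hlow, hhigh, h𝓜card, fun 𝓑 h𝓑 h𝓑card => ?_⟩
  exact Prod.Lex.monotone_fst _ _ (hmax 𝓑 ((h𝒞 𝓑).mpr ⟨h𝓑, h𝓑card⟩))

theorem stmt1 (n i r : ℕ) (hn : 0 < n) (hi : 0 < i) (hi2 : i ≤ 2 ^ (n - 1))
    (hr1 : ∑ j ∈ Finset.Icc (r + 1) n, n.choose j ≤ 2 ^ (n - 1) + i)
    (hr2 : 2 ^ (n - 1) + i ≤ ∑ j ∈ Finset.Icc r n, n.choose j)
    (p : ℝ) (hp0 : 0 < p) (hp1 : p < 1) :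
    ∃ 𝓐 : Finset (Finset ℕ),
      atLeast n (r + 1) ⊆ 𝓐 ∧ 𝓐 ⊆ atLeast n r ∧ 𝓐.card = 2 ^ (n - 1) + i ∧
      ∀ 𝓑 : Finset (Finset ℕ), 𝓑 ⊆ (Finset.Icc 1 n).powerset →
        𝓑.card = 2 ^ (n - 1) + i → probInter p 𝓑 ≤ probInter p 𝓐 :=
  stmt1_general n i r hr1 hr2 p hp0 hp1
end

section
/- Let $\mathcal{A} \subseteq [n]^{(r)}$, let $i, j \in [n]$ with $i < j$, and let $\mathcal{C} = \mathcal{C}_{ij}\mathcal{A}$. Then there exists an injection $\phi$ from the collection of intersecting subfamilies of $\mathcal{A}$ to the collection of intersecting subfamilies of $\mathcal{C}$ such that $|\phi(\mathcal{B})| = |\mathcal{B}|$ for every intersecting subfamily $\mathcal{B} \subseteq \mathcal{A}$. -/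
open Finset

/-!
Let `C = C_ij`. A member `X` of an intersecting `𝓑 ⊆ 𝓐` can only fail to lie in `C_ij 𝓐` when
`C X ∉ 𝓐`, so such members must be replaced by their compressions, and this may force further
replacements to keep the family intersecting. We replace exactly the *forced* members: those `A`
that every intersecting `𝓑' ⊆ 𝓐` with `𝓑'.image C = 𝓑.image C` contains while omitting `C A`.
The forced members depend only on `𝓑.image C`, which the replacement does not change since
`C ∘ C = C`; so they, and then `𝓑`, can be read off the new family, which gives injectivity.
-/

variable {i j : ℕ}

lemma setCompress_of_mem_of_not_mem {A : Finset ℕ} (hj : j ∈ A) (hi : i ∉ A) :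
    setCompress i j A = insert i (A.erase j) := if_pos ⟨hj, hi⟩

lemma setCompress_of_not {A : Finset ℕ} (h : ¬(j ∈ A ∧ i ∉ A)) : setCompress i j A = A :=
  if_neg h

lemma left_mem_setCompress {A : Finset ℕ} (hj : j ∈ A) (hi : i ∉ A) :
    i ∈ setCompress i j A := by
  rw [setCompress_of_mem_of_not_mem hj hi]
  exact mem_insert_self _ _

lemma setCompress_idem (A : Finset ℕ) :
    setCompress i j (setCompress i j A) = setCompress i j A := by
  by_cases h : j ∈ A ∧ i ∉ A
  · exact setCompress_of_not fun h' => h'.2 (left_mem_setCompress h.1 h.2)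
  · rw [setCompress_of_not h, setCompress_of_not h]

lemma setCompress_injOn :
    Set.InjOn (setCompress i j) {A | j ∈ A ∧ i ∉ A} := by
  rintro A ⟨hjA, hiA⟩ B ⟨hjB, hiB⟩ h
  rw [setCompress_of_mem_of_not_mem hjA hiA, setCompress_of_mem_of_not_mem hjB hiB] at h
  have h' := congrArg (fun s => insert j (s.erase i)) h
  simpa only [erase_insert fun hc => hiA (mem_of_mem_erase hc),
    erase_insert fun hc => hiB (mem_of_mem_erase hc), insert_erase hjA, insert_erase hjB] using h'

lemma eq_or_eq_setCompress_of_setCompress_eq {W X : Finset ℕ} (hj : j ∈ X) (hi : i ∉ X)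
    (h : setCompress i j W = setCompress i j X) : W = X ∨ W = setCompress i j X := by
  by_cases hW : j ∈ W ∧ i ∉ W
  · exact Or.inl (setCompress_injOn hW ⟨hj, hi⟩ h)
  · rw [setCompress_of_not hW] at h
    exact Or.inr h

lemma disjoint_setCompress {X A : Finset ℕ} (hiX : i ∉ X) (hiA : i ∉ A) (h : X ∩ A ⊆ {j}) :
    Disjoint X (setCompress i j A) := by
  rw [disjoint_iff_ne]
  rintro x hxX y hyA rfl
  by_cases hA : j ∈ A
  · rw [setCompress_of_mem_of_not_mem hA hiA, mem_insert, mem_erase] at hyA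
    rcases hyA with rfl | ⟨hxj, hxA⟩
    · exact hiX hxX
    · exact hxj (mem_singleton.mp (h (mem_inter.mpr ⟨hxX, hxA⟩)))
  · rw [setCompress_of_not fun h' => hA h'.1] at hyA
    obtain rfl := mem_singleton.mp (h (mem_inter.mpr ⟨hxX, hyA⟩))
    exact hA hyA

lemma mem_famCompress_of_mem {𝓐 : Finset (Finset ℕ)} {A : Finset ℕ} (hA : A ∈ 𝓐)
    (hCA : setCompress i j A ∈ 𝓐) : A ∈ famCompress i j 𝓐 :=
  mem_union_right _ (mem_filter.mpr ⟨hA, hCA⟩)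

lemma setCompress_mem_famCompress {𝓐 : Finset (Finset ℕ)} {A : Finset ℕ} (hA : A ∈ 𝓐) :
    setCompress i j A ∈ famCompress i j 𝓐 :=
  mem_union_left _ (mem_image_of_mem _ hA)

lemma mem_or_setCompress_mem_of_image_eq {𝓑 𝓑' : Finset (Finset ℕ)} {X : Finset ℕ}
    (himage : 𝓑'.image (setCompress i j) = 𝓑.image (setCompress i j)) (hX : X ∈ 𝓑)
    (hj : j ∈ X) (hi : i ∉ X) : X ∈ 𝓑' ∨ setCompress i j X ∈ 𝓑' := by
  obtain ⟨W, hW, hWX⟩ := mem_image.mp (himage ▸ mem_image_of_mem (setCompress i j) hX)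
  rcases eq_or_eq_setCompress_of_setCompress_eq hj hi hWX with rfl | rfl
  exacts [Or.inl hW, Or.inr hW]

variable (i j) in
noncomputable def forcedSets (𝓐 𝓘 : Finset (Finset ℕ)) : Finset (Finset ℕ) :=
  open Classical in
  𝓐.filter fun A => ∀ 𝓑 ⊆ 𝓐, IsIntersecting 𝓑 → 𝓑.image (setCompress i j) = 𝓘 →
    A ∈ 𝓑 ∧ setCompress i j A ∉ 𝓑

section ForcedSets

variable {𝓐 𝓑 : Finset (Finset ℕ)}

lemma mem_forcedSets {𝓘 : Finset (Finset ℕ)} {A : Finset ℕ} :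
    A ∈ forcedSets i j 𝓐 𝓘 ↔ A ∈ 𝓐 ∧ ∀ 𝓑 ⊆ 𝓐, IsIntersecting 𝓑 →
      𝓑.image (setCompress i j) = 𝓘 → A ∈ 𝓑 ∧ setCompress i j A ∉ 𝓑 := by
  unfold forcedSets
  exact mem_filter

lemma mem_and_setCompress_not_mem_of_mem_forcedSets (h𝓑 : 𝓑 ⊆ 𝓐) (hB : IsIntersecting 𝓑)
    {A : Finset ℕ} (hA : A ∈ forcedSets i j 𝓐 (𝓑.image (setCompress i j))) :
    A ∈ 𝓑 ∧ setCompress i j A ∉ 𝓑 :=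
  (mem_forcedSets.mp hA).2 𝓑 h𝓑 hB rfl

lemma movable_of_mem_forcedSets (h𝓑 : 𝓑 ⊆ 𝓐) (hB : IsIntersecting 𝓑) {A : Finset ℕ}
    (hA : A ∈ forcedSets i j 𝓐 (𝓑.image (setCompress i j))) : j ∈ A ∧ i ∉ A := by
  obtain ⟨hAB, hCA⟩ := mem_and_setCompress_not_mem_of_mem_forcedSets h𝓑 hB hA
  by_contra h
  exact hCA (by rwa [setCompress_of_not h])

lemma mem_forcedSets_of_setCompress_not_mem (h𝓑 : 𝓑 ⊆ 𝓐) {X : Finset ℕ} (hX : X ∈ 𝓑)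
    (hCX : setCompress i j X ∉ 𝓐) : X ∈ forcedSets i j 𝓐 (𝓑.image (setCompress i j)) := by
  have hmov : j ∈ X ∧ i ∉ X := by
    by_contra h
    exact hCX (by rw [setCompress_of_not h]; exact h𝓑 hX)
  refine mem_forcedSets.mpr ⟨h𝓑 hX, fun 𝓑' h𝓑' _ himage => ?_⟩
  have hCX' : setCompress i j X ∉ 𝓑' := fun h => hCX (h𝓑' h)
  exact ⟨(mem_or_setCompress_mem_of_image_eq himage hX hmov.1 hmov.2).resolve_right hCX', hCX'⟩

/-- If `X` missed the compression of a forced set `A`, then `X ∩ A = {j}` and the compression of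
`X` would miss `A`; so some intersecting family with the same compressions keeping `A` must keep
`X` uncompressed, i.e. `X` is forced as well. -/
lemma inter_setCompress_nonempty_of_mem_forcedSets (h𝓑 : 𝓑 ⊆ 𝓐) (hB : IsIntersecting 𝓑)
    {X A : Finset ℕ} (hX : X ∈ 𝓑)
    (hXR : X ∉ forcedSets i j 𝓐 (𝓑.image (setCompress i j)))
    (hA : A ∈ forcedSets i j 𝓐 (𝓑.image (setCompress i j))) :
    (X ∩ setCompress i j A).Nonempty := by
  obtain ⟨hjA, hiA⟩ := movable_of_mem_forcedSets h𝓑 hB hA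
  rw [← not_disjoint_iff_nonempty_inter]
  intro hdisj
  have hiX : i ∉ X := fun h => disjoint_left.mp hdisj h (left_mem_setCompress hjA hiA)
  have hXA : X ∩ A ⊆ {j} := by
    intro x hx
    obtain ⟨hxX, hxA⟩ := mem_inter.mp hx
    rw [mem_singleton]
    by_contra hxj
    rw [setCompress_of_mem_of_not_mem hjA hiA] at hdisj
    exact disjoint_left.mp hdisj hxX (mem_insert_of_mem (mem_erase.mpr ⟨hxj, hxA⟩))
  have hjX : j ∈ X := by
    obtain ⟨x, hx⟩ := hB X hX A (mem_and_setCompress_not_mem_of_mem_forcedSets h𝓑 hB hA).1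
    exact mem_singleton.mp (hXA hx) ▸ (mem_inter.mp hx).1
  have hAX : Disjoint A (setCompress i j X) :=
    disjoint_setCompress hiA hiX (inter_comm X A ▸ hXA)
  apply hXR
  refine mem_forcedSets.mpr ⟨h𝓑 hX, fun 𝓑' h𝓑' hB' himage => ?_⟩
  have hA' := ((mem_forcedSets.mp hA).2 𝓑' h𝓑' hB' himage).1
  have hCX' : setCompress i j X ∉ 𝓑' := fun h =>
    not_nonempty_iff_eq_empty.mpr (disjoint_iff_inter_eq_empty.mp hAX) (hB' A hA' _ h)
  exact ⟨(mem_or_setCompress_mem_of_image_eq himage hX hjX hiX).resolve_right hCX', hCX'⟩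

end ForcedSets

variable (i j) in
noncomputable def compressForced (𝓐 𝓑 : Finset (Finset ℕ)) : Finset (Finset ℕ) :=
  let R := forcedSets i j 𝓐 (𝓑.image (setCompress i j))
  (𝓑 \ R) ∪ R.image (setCompress i j)

variable (i j) in
noncomputable def restoreForced (𝓐 𝓔 : Finset (Finset ℕ)) : Finset (Finset ℕ) :=
  let R := forcedSets i j 𝓐 (𝓔.image (setCompress i j))
  (𝓔 \ R.image (setCompress i j)) ∪ R

section CompressForced

variable {𝓐 𝓑 : Finset (Finset ℕ)}

lemma forcedSets_subset (h𝓑 : 𝓑 ⊆ 𝓐) (hB : IsIntersecting 𝓑) :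
    forcedSets i j 𝓐 (𝓑.image (setCompress i j)) ⊆ 𝓑 := fun _ hA =>
  (mem_and_setCompress_not_mem_of_mem_forcedSets h𝓑 hB hA).1

lemma disjoint_sdiff_image_forcedSets (h𝓑 : 𝓑 ⊆ 𝓐) (hB : IsIntersecting 𝓑) :
    Disjoint (𝓑 \ forcedSets i j 𝓐 (𝓑.image (setCompress i j)))
      ((forcedSets i j 𝓐 (𝓑.image (setCompress i j))).image (setCompress i j)) := by
  rw [disjoint_right]
  rintro _ hZ hZ'
  obtain ⟨A, hA, rfl⟩ := mem_image.mp hZ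
  exact (mem_and_setCompress_not_mem_of_mem_forcedSets h𝓑 hB hA).2 (mem_sdiff.mp hZ').1

lemma card_compressForced (h𝓑 : 𝓑 ⊆ 𝓐) (hB : IsIntersecting 𝓑) :
    (compressForced i j 𝓐 𝓑).card = 𝓑.card := by
  have hinj : Set.InjOn (setCompress i j) (forcedSets i j 𝓐 (𝓑.image (setCompress i j))) :=
    setCompress_injOn.mono fun _ hA => movable_of_mem_forcedSets h𝓑 hB hA
  have hR := forcedSets_subset (i := i) (j := j) h𝓑 hB
  rw [compressForced, card_union_of_disjoint (disjoint_sdiff_image_forcedSets h𝓑 hB),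
    card_sdiff_of_subset hR, card_image_of_injOn hinj, Nat.sub_add_cancel (card_le_card hR)]

lemma image_compressForced (h𝓑 : 𝓑 ⊆ 𝓐) (hB : IsIntersecting 𝓑) :
    (compressForced i j 𝓐 𝓑).image (setCompress i j) = 𝓑.image (setCompress i j) := by
  rw [compressForced, image_union, image_image, show setCompress i j ∘ setCompress i j =
    setCompress i j from funext setCompress_idem, ← image_union,
    sdiff_union_of_subset (forcedSets_subset h𝓑 hB)]

lemma restoreForced_compressForced (h𝓑 : 𝓑 ⊆ 𝓐) (hB : IsIntersecting 𝓑) :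
    restoreForced i j 𝓐 (compressForced i j 𝓐 𝓑) = 𝓑 := by
  rw [restoreForced, image_compressForced h𝓑 hB, compressForced,
    union_sdiff_cancel_right (disjoint_sdiff_image_forcedSets h𝓑 hB),
    sdiff_union_of_subset (forcedSets_subset h𝓑 hB)]

lemma compressForced_subset_famCompress (h𝓑 : 𝓑 ⊆ 𝓐) (hB : IsIntersecting 𝓑) :
    compressForced i j 𝓐 𝓑 ⊆ famCompress i j 𝓐 := by
  intro Z hZ
  rcases mem_union.mp hZ with hZ | hZ
  · obtain ⟨hZB, hZR⟩ := mem_sdiff.mp hZ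
    by_cases hCZ : setCompress i j Z ∈ 𝓐
    · exact mem_famCompress_of_mem (h𝓑 hZB) hCZ
    · exact absurd (mem_forcedSets_of_setCompress_not_mem h𝓑 hZB hCZ) hZR
  · obtain ⟨A, hA, rfl⟩ := mem_image.mp hZ
    exact setCompress_mem_famCompress (h𝓑 (forcedSets_subset h𝓑 hB hA))

lemma isIntersecting_compressForced (h𝓑 : 𝓑 ⊆ 𝓐) (hB : IsIntersecting 𝓑) :
    IsIntersecting (compressForced i j 𝓐 𝓑) := by
  intro X hX Y hY
  rcases mem_union.mp hX with hX | hX <;> rcases mem_union.mp hY with hY | hY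
  · exact hB X (mem_sdiff.mp hX).1 Y (mem_sdiff.mp hY).1
  · obtain ⟨A, hA, rfl⟩ := mem_image.mp hY
    exact inter_setCompress_nonempty_of_mem_forcedSets h𝓑 hB (mem_sdiff.mp hX).1
      (mem_sdiff.mp hX).2 hA
  · obtain ⟨A, hA, rfl⟩ := mem_image.mp hX
    rw [inter_comm]
    exact inter_setCompress_nonempty_of_mem_forcedSets h𝓑 hB (mem_sdiff.mp hY).1
      (mem_sdiff.mp hY).2 hA
  · obtain ⟨A, hA, rfl⟩ := mem_image.mp hX
    obtain ⟨A', hA', rfl⟩ := mem_image.mp hY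
    obtain ⟨hjA, hiA⟩ := movable_of_mem_forcedSets h𝓑 hB hA
    obtain ⟨hjA', hiA'⟩ := movable_of_mem_forcedSets h𝓑 hB hA'
    exact ⟨i, mem_inter.mpr ⟨left_mem_setCompress hjA hiA, left_mem_setCompress hjA' hiA'⟩⟩

end CompressForced

theorem stmt3_general (𝓐 : Finset (Finset ℕ))
    (i j : ℕ) :
    ∃ φ : Finset (Finset ℕ) → Finset (Finset ℕ),
      Set.InjOn φ ↑(𝓐.powerset.filter IsIntersecting) ∧
      ∀ 𝓑 ∈ 𝓐.powerset.filter IsIntersecting,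
        φ 𝓑 ∈ (famCompress i j 𝓐).powerset.filter IsIntersecting ∧
        (φ 𝓑).card = 𝓑.card := by
  simp only [coe_filter, mem_filter, mem_powerset]
  refine ⟨compressForced i j 𝓐, ?_, fun 𝓑 ⟨h𝓑, hB⟩ => ?_⟩
  · exact Set.LeftInvOn.injOn (f₁' := restoreForced i j 𝓐) fun 𝓑 ⟨h𝓑, hB⟩ =>
      restoreForced_compressForced h𝓑 hB
  · exact ⟨⟨compressForced_subset_famCompress h𝓑 hB, isIntersecting_compressForced h𝓑 hB⟩,
      card_compressForced h𝓑 hB⟩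

theorem stmt3 (n r : ℕ) (𝓐 : Finset (Finset ℕ)) (h𝓐 : 𝓐 ⊆ uniformFam n r)
    (i j : ℕ) (hi : 1 ≤ i) (hij : i < j) (hj : j ≤ n) :
    ∃ φ : Finset (Finset ℕ) → Finset (Finset ℕ),
      Set.InjOn φ ↑(𝓐.powerset.filter IsIntersecting) ∧
      ∀ 𝓑 ∈ 𝓐.powerset.filter IsIntersecting,
        φ 𝓑 ∈ (famCompress i j 𝓐).powerset.filter IsIntersecting ∧
        (φ 𝓑).card = 𝓑.card :=
  stmt3_general 𝓐 i j
end

section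
/- Let $\mathcal{A} \subseteq [n]^{(r)}$, let $i, j \in [n]$ with $i < j$, and let $p \in (0,1)$. Then $\mathbb{P}((\mathcal{C}_{ij}\mathcal{A})_p \text{ is intersecting}) \ge \mathbb{P}(\mathcal{A}_p \text{ is intersecting})$; that is, $\sum_{\mathcal{B} \subseteq \mathcal{C}_{ij}\mathcal{A},\ \mathcal{B} \text{ intersecting}} p^{|\mathcal{B}|}(1-p)^{|\mathcal{C}_{ij}\mathcal{A}|-|\mathcal{B}|} \ge \sum_{\mathcal{B} \subseteq \mathcal{A},\ \mathcal{B} \text{ intersecting}} p^{|\mathcal{B}|}(1-p)^{|\mathcal{A}|-|\mathcal{B}|}$. -/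
open Finset

/-!
Write `C` for the `ij`-compression. We send each intersecting `𝓑 ⊆ 𝓐` to an intersecting
`𝓑' ⊆ C 𝓐` of the same size, injectively in `𝓑`; as `|C 𝓐| = |𝓐|`, summing the weights
`p ^ |𝓑| * (1 - p) ^ (|𝓐| - |𝓑|)` gives the inequality.

A member `X` of `𝓑` with `C X ∉ 𝓐` has to be replaced by `C X`. The only other members that move
are lower halves of *split pairs*: `X, C X ∈ 𝓐` with exactly one of them in `𝓑`. Link two sets
when they are disjoint outside `{i, j}`. An intersecting family cannot contain the lower half of
one split pair and the upper half of a linked one; and a split pair linked to a member `X` with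
`C X ∉ 𝓐` must appear in `𝓑` through its lower half but in `𝓑'` through its upper half. So we
compress exactly the split pairs whose linked component reaches such a member. That component
structure can be read off `𝓑'` as well, which makes the map invertible.
-/

lemma IsIntersecting.not_disjoint {𝓑 : Finset (Finset ℕ)} {A B : Finset ℕ}
    (h𝓑 : IsIntersecting 𝓑) (hA : A ∈ 𝓑) (hB : B ∈ 𝓑) : ¬ Disjoint A B :=
  not_disjoint_iff_nonempty_inter.2 (h𝓑 A hA B hB)

namespace IJ

variable {i j : ℕ} {A B X Y : Finset ℕ} {𝓐 𝓑 : Finset (Finset ℕ)}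

def Compressible (i j : ℕ) (A : Finset ℕ) : Prop := j ∈ A ∧ i ∉ A

def uncompress (i j : ℕ) (A : Finset ℕ) : Finset ℕ := insert j (A.erase i)

def core (i j : ℕ) (A : Finset ℕ) : Finset ℕ := A \ {i, j}

lemma setCompress_of_compressible (h : Compressible i j A) :
    setCompress i j A = insert i (A.erase j) := if_pos h

lemma setCompress_of_not_compressible (h : ¬ Compressible i j A) : setCompress i j A = A :=
  if_neg h

lemma mem_setCompress_of_compressible (h : Compressible i j A) : i ∈ setCompress i j A := by
  rw [setCompress_of_compressible h]
  exact mem_insert_self _ _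

lemma notMem_setCompress_of_compressible (hij : i ≠ j) (h : Compressible i j A) :
    j ∉ setCompress i j A := by
  simp [setCompress_of_compressible h, hij.symm]

lemma not_compressible_setCompress (A : Finset ℕ) : ¬ Compressible i j (setCompress i j A) := by
  by_cases h : Compressible i j A
  · exact fun h' => h'.2 (mem_setCompress_of_compressible h)
  · rwa [setCompress_of_not_compressible h]

lemma setCompress_idem (A : Finset ℕ) :
    setCompress i j (setCompress i j A) = setCompress i j A :=
  setCompress_of_not_compressible (not_compressible_setCompress A)

lemma uncompress_setCompress (h : Compressible i j A) :
    uncompress i j (setCompress i j A) = A := by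
  have hi : i ∉ A.erase j := fun hi => h.2 (mem_of_mem_erase hi)
  rw [setCompress_of_compressible h, uncompress, erase_insert hi, insert_erase h.1]

lemma compressible_uncompress (hij : i ≠ j) (A : Finset ℕ) :
    Compressible i j (uncompress i j A) :=
  ⟨mem_insert_self _ _, by simp [uncompress, hij]⟩

lemma setCompress_uncompress (hij : i ≠ j) (hi : i ∈ A) (hj : j ∉ A) :
    setCompress i j (uncompress i j A) = A := by
  rw [setCompress_of_compressible (compressible_uncompress hij A), uncompress,
    erase_insert (by simp [hj]), insert_erase hi]

lemma core_setCompress (A : Finset ℕ) : core i j (setCompress i j A) = core i j A := by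
  by_cases h : Compressible i j A
  · ext x
    by_cases hx : x = i ∨ x = j
    · simp [core, hx]
    · rw [not_or] at hx
      simp [core, setCompress_of_compressible h, hx.1, hx.2]
  · rw [setCompress_of_not_compressible h]

lemma disjoint_of_disjoint_core (hi : i ∉ A ∨ i ∉ B) (hj : j ∉ A ∨ j ∉ B)
    (h : Disjoint (core i j A) (core i j B)) : Disjoint A B := by
  rw [disjoint_left]
  intro x hxA hxB
  have hxi : x ≠ i := by rintro rfl; tauto
  have hxj : x ≠ j := by rintro rfl; tauto
  exact disjoint_left.1 h (show x ∈ core i j A by simp [core, hxA, hxi, hxj])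
    (by simp [core, hxB, hxi, hxj])

lemma compressible_of_setCompress_notMem (hA : A ∈ 𝓐)
    (h : setCompress i j A ∉ 𝓐) : Compressible i j A := by
  by_contra hA'
  rw [setCompress_of_not_compressible hA'] at h
  exact h hA

lemma setCompress_eq_compress (hij : i ≠ j) : setCompress i j = UV.compress {i} {j} := by
  ext A : 1
  by_cases h : Compressible i j A
  · rw [setCompress_of_compressible h, UV.compress_of_disjoint_of_le
      (disjoint_singleton_left.2 h.2) (singleton_subset_iff.2 h.1)]
    ext x
    by_cases hx : x = i <;> simp [hx, hij, and_comm]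
  · rw [setCompress_of_not_compressible h, UV.compress, if_neg]
    rwa [disjoint_singleton_left, singleton_subset_iff, and_comm]

lemma famCompress_eq_compression (hij : i ≠ j) (𝓐 : Finset (Finset ℕ)) :
    famCompress i j 𝓐 = UV.compression {i} {j} 𝓐 := by
  ext A
  simp only [famCompress, setCompress_eq_compress hij, UV.mem_compression, mem_union, mem_image,
    mem_filter]
  constructor
  · rintro (⟨B, hB, rfl⟩ | h)
    · by_cases hA : UV.compress {i} {j} B ∈ 𝓐
      · exact Or.inl ⟨hA, by rwa [UV.compress_idem]⟩
      · exact Or.inr ⟨hA, B, hB, rfl⟩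
    · exact Or.inl h
  · rintro (h | ⟨-, h⟩)
    · exact Or.inr h
    · exact Or.inl h

lemma card_famCompress (hij : i ≠ j) (𝓐 : Finset (Finset ℕ)) :
    (famCompress i j 𝓐).card = 𝓐.card := by
  rw [famCompress_eq_compression hij, UV.card_compression]

def IsSplitPair (i j : ℕ) (𝓐 𝓢 : Finset (Finset ℕ)) (X : Finset ℕ) : Prop :=
  Compressible i j X ∧ X ∈ 𝓐 ∧ setCompress i j X ∈ 𝓐 ∧ Xor (X ∈ 𝓢) (setCompress i j X ∈ 𝓢)

def Linked (i j : ℕ) (𝓐 𝓢 : Finset (Finset ℕ)) (X Y : Finset ℕ) : Prop :=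
  IsSplitPair i j 𝓐 𝓢 Y ∧ Disjoint (core i j X) (core i j Y)

/-- For `𝓢 ⊆ 𝓐` the sets `B` are the members with `C B ∉ 𝓐`; for the image of `𝓢` under
`compressSubfamily` they are their compressions, which have the same core. -/
def ReachesUnpaired (i j : ℕ) (𝓐 𝓢 : Finset (Finset ℕ)) (X : Finset ℕ) : Prop :=
  ∃ W, Relation.ReflTransGen (Linked i j 𝓐 𝓢) X W ∧
    ∃ B ∈ 𝓢, setCompress i j B ∉ 𝓐 ∧ Disjoint (core i j W) (core i j B)

def Shifts (i j : ℕ) (𝓐 𝓑 : Finset (Finset ℕ)) (X : Finset ℕ) : Prop :=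
  X ∈ 𝓑 ∧ Compressible i j X ∧
    (setCompress i j X ∉ 𝓐 ∨ (setCompress i j X ∉ 𝓑 ∧ ReachesUnpaired i j 𝓐 𝓑 X))

open Classical in
noncomputable def shift (i j : ℕ) (𝓐 𝓑 : Finset (Finset ℕ)) (X : Finset ℕ) : Finset ℕ :=
  if Shifts i j 𝓐 𝓑 X then setCompress i j X else X

noncomputable def compressSubfamily (i j : ℕ) (𝓐 𝓑 : Finset (Finset ℕ)) : Finset (Finset ℕ) :=
  𝓑.image (shift i j 𝓐 𝓑)

def Unshifts (i j : ℕ) (𝓐 𝓓 : Finset (Finset ℕ)) (Y : Finset ℕ) : Prop :=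
  i ∈ Y ∧ j ∉ Y ∧
    (Y ∉ 𝓐 ∨ (uncompress i j Y ∈ 𝓐 ∧ ReachesUnpaired i j 𝓐 𝓓 (uncompress i j Y)))

open Classical in
noncomputable def unshift (i j : ℕ) (𝓐 𝓓 : Finset (Finset ℕ)) (Y : Finset ℕ) : Finset ℕ :=
  if Unshifts i j 𝓐 𝓓 Y then uncompress i j Y else Y

lemma shift_of_shifts (h : Shifts i j 𝓐 𝓑 X) : shift i j 𝓐 𝓑 X = setCompress i j X := by
  rw [shift, if_pos h]

lemma shift_of_not_shifts (h : ¬ Shifts i j 𝓐 𝓑 X) : shift i j 𝓐 𝓑 X = X := by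
  rw [shift, if_neg h]

lemma not_shifts_of_setCompress_mem (h𝓑𝓐 : 𝓑 ⊆ 𝓐) (h : setCompress i j X ∈ 𝓑) :
    ¬ Shifts i j 𝓐 𝓑 X := by
  rintro ⟨-, -, hX | ⟨hX, -⟩⟩
  exacts [hX (h𝓑𝓐 h), hX h]

lemma compressSubfamily_subset_famCompress (h𝓑𝓐 : 𝓑 ⊆ 𝓐) :
    compressSubfamily i j 𝓐 𝓑 ⊆ famCompress i j 𝓐 := by
  simp only [compressSubfamily, image_subset_iff]
  intro X hX
  by_cases hs : Shifts i j 𝓐 𝓑 X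
  · rw [shift_of_shifts hs]
    exact mem_union_left _ (mem_image_of_mem _ (h𝓑𝓐 hX))
  rw [shift_of_not_shifts hs]
  by_cases hXc : Compressible i j X
  · have hXA : setCompress i j X ∈ 𝓐 := by
      by_contra hXA
      exact hs ⟨hX, hXc, Or.inl hXA⟩
    exact mem_union_right _ (mem_filter.2 ⟨h𝓑𝓐 hX, hXA⟩)
  · exact mem_union_left _ (mem_image.2 ⟨X, h𝓑𝓐 hX, setCompress_of_not_compressible hXc⟩)

lemma mem_compressSubfamily_of_compressible (hX : Compressible i j X) :
    X ∈ compressSubfamily i j 𝓐 𝓑 ↔ X ∈ 𝓑 ∧ ¬ Shifts i j 𝓐 𝓑 X := by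
  constructor
  · intro h
    obtain ⟨X₀, hX₀, rfl⟩ := mem_image.1 h
    by_cases hs : Shifts i j 𝓐 𝓑 X₀
    · rw [shift_of_shifts hs] at hX
      exact absurd hX (not_compressible_setCompress X₀)
    · rw [shift_of_not_shifts hs]
      exact ⟨hX₀, hs⟩
  · rintro ⟨hXB, hs⟩
    exact mem_image.2 ⟨X, hXB, shift_of_not_shifts hs⟩

lemma setCompress_mem_compressSubfamily (hX : Compressible i j X) :
    setCompress i j X ∈ compressSubfamily i j 𝓐 𝓑 ↔
      setCompress i j X ∈ 𝓑 ∨ Shifts i j 𝓐 𝓑 X := by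
  constructor
  · intro h
    obtain ⟨X₀, hX₀, he⟩ := mem_image.1 h
    by_cases hs : Shifts i j 𝓐 𝓑 X₀
    · rw [shift_of_shifts hs] at he
      have := congrArg (uncompress i j) he
      rw [uncompress_setCompress hs.2.1, uncompress_setCompress hX] at this
      exact Or.inr (this ▸ hs)
    · rw [shift_of_not_shifts hs] at he
      exact Or.inl (he ▸ hX₀)
  · rintro (h | h)
    · refine mem_image.2 ⟨_, h, shift_of_not_shifts fun hs => ?_⟩
      exact not_compressible_setCompress X hs.2.1
    · exact mem_image.2 ⟨X, h.1, shift_of_shifts h⟩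

lemma isSplitPair_compressSubfamily (h𝓑𝓐 : 𝓑 ⊆ 𝓐) :
    IsSplitPair i j 𝓐 (compressSubfamily i j 𝓐 𝓑) X ↔ IsSplitPair i j 𝓐 𝓑 X := by
  refine and_congr_right fun hX => and_congr_right fun _ => and_congr_right fun _ => ?_
  have hA := mem_compressSubfamily_of_compressible (𝓐 := 𝓐) (𝓑 := 𝓑) hX
  have hB := setCompress_mem_compressSubfamily (𝓐 := 𝓐) (𝓑 := 𝓑) hX
  have hS : Shifts i j 𝓐 𝓑 X → X ∈ 𝓑 := And.left
  have hC := not_shifts_of_setCompress_mem (X := X) (i := i) (j := j) h𝓑𝓐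
  unfold Xor
  tauto

lemma exists_unpaired_compressSubfamily (h𝓑𝓐 : 𝓑 ⊆ 𝓐) (P : Finset ℕ → Prop) :
    (∃ B ∈ compressSubfamily i j 𝓐 𝓑, setCompress i j B ∉ 𝓐 ∧ P (core i j B)) ↔
      ∃ B ∈ 𝓑, setCompress i j B ∉ 𝓐 ∧ P (core i j B) := by
  constructor
  · rintro ⟨_, hB', hBA, hP⟩
    obtain ⟨B, hB, rfl⟩ := mem_image.1 hB'
    by_cases hs : Shifts i j 𝓐 𝓑 B
    · rw [shift_of_shifts hs, core_setCompress] at hP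
      rw [shift_of_shifts hs, setCompress_idem] at hBA
      exact ⟨B, hB, hBA, hP⟩
    · rw [shift_of_not_shifts hs] at hBA hP
      exact ⟨B, hB, hBA, hP⟩
  · rintro ⟨B, hB, hBA, hP⟩
    have hBc := compressible_of_setCompress_notMem (h𝓑𝓐 hB) hBA
    refine ⟨setCompress i j B, mem_image.2 ⟨B, hB, shift_of_shifts ⟨hB, hBc, Or.inl hBA⟩⟩, ?_, ?_⟩
    · rwa [setCompress_idem]
    · rwa [core_setCompress]

lemma reachesUnpaired_compressSubfamily (h𝓑𝓐 : 𝓑 ⊆ 𝓐) :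
    ReachesUnpaired i j 𝓐 (compressSubfamily i j 𝓐 𝓑) X ↔ ReachesUnpaired i j 𝓐 𝓑 X := by
  have hLinked : Linked i j 𝓐 (compressSubfamily i j 𝓐 𝓑) = Linked i j 𝓐 𝓑 := by
    ext X Y
    rw [Linked, Linked, isSplitPair_compressSubfamily h𝓑𝓐]
  simp only [ReachesUnpaired, hLinked, exists_unpaired_compressSubfamily h𝓑𝓐]

lemma not_reachesUnpaired_of_setCompress_mem (hij : i ≠ j) (h𝓑𝓐 : 𝓑 ⊆ 𝓐)
    (h𝓑 : IsIntersecting 𝓑) (hX : Compressible i j X) (hXB : setCompress i j X ∈ 𝓑) :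
    ¬ ReachesUnpaired i j 𝓐 𝓑 X := by
  rintro ⟨W, hXW, B, hB, hBA, hWB⟩
  have hW : Compressible i j W ∧ setCompress i j W ∈ 𝓑 := by
    clear hWB
    induction hXW with
    | refl => exact ⟨hX, hXB⟩
    | @tail U V _ hUV ih =>
      obtain ⟨⟨hVc, -, -, hV⟩, hUV⟩ := hUV
      refine ⟨hVc, hV.elim (fun hV => (h𝓑.not_disjoint ih.2 hV.1 ?_).elim) And.left⟩
      refine disjoint_of_disjoint_core (Or.inr hVc.2)
        (Or.inl (notMem_setCompress_of_compressible hij ih.1)) ?_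
      rwa [core_setCompress]
  have hBc := compressible_of_setCompress_notMem (h𝓑𝓐 hB) hBA
  refine h𝓑.not_disjoint hW.2 hB ?_
  refine disjoint_of_disjoint_core (Or.inr hBc.2)
    (Or.inl (notMem_setCompress_of_compressible hij hW.1)) ?_
  rwa [core_setCompress]

lemma inter_nonempty_of_shifts_of_not_shifts (hij : i ≠ j) (h𝓑𝓐 : 𝓑 ⊆ 𝓐)
    (h𝓑 : IsIntersecting 𝓑) (hXs : Shifts i j 𝓐 𝓑 X) (hY : Y ∈ 𝓑)
    (hYs : ¬ Shifts i j 𝓐 𝓑 Y) : (setCompress i j X ∩ Y).Nonempty := by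
  obtain ⟨hX, hXc, hXmove⟩ := hXs
  rw [← not_disjoint_iff_nonempty_inter]
  intro hXY
  have hcore : Disjoint (core i j X) (core i j Y) := by
    rw [← core_setCompress]
    exact hXY.mono sdiff_subset sdiff_subset
  have hiY : i ∉ Y := disjoint_left.1 hXY (mem_setCompress_of_compressible hXc)
  have hjY : j ∈ Y := by
    by_contra hjY
    exact h𝓑.not_disjoint hX hY (disjoint_of_disjoint_core (Or.inl hXc.2) (Or.inr hjY) hcore)
  have hYc : Compressible i j Y := ⟨hjY, hiY⟩
  have hYreach : ReachesUnpaired i j 𝓐 𝓑 Y := by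
    by_cases hXA : setCompress i j X ∈ 𝓐
    · obtain ⟨hXB, W, hXW, hW⟩ := hXmove.resolve_left (not_not.2 hXA)
      exact ⟨W, .head ⟨⟨hXc, h𝓑𝓐 hX, hXA, Or.inl ⟨hX, hXB⟩⟩, hcore.symm⟩ hXW, hW⟩
    · exact ⟨Y, .refl, X, hX, hXA, hcore.symm⟩
  have hYB : setCompress i j Y ∈ 𝓑 := by
    by_contra hYB
    by_cases hYA : setCompress i j Y ∈ 𝓐
    · exact hYs ⟨hY, hYc, Or.inr ⟨hYB, hYreach⟩⟩
    · exact hYs ⟨hY, hYc, Or.inl hYA⟩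
  refine h𝓑.not_disjoint hX hYB ?_
  refine disjoint_of_disjoint_core (Or.inl hXc.2)
    (Or.inr (notMem_setCompress_of_compressible hij hYc)) ?_
  rwa [core_setCompress]

lemma isIntersecting_compressSubfamily (hij : i ≠ j) (h𝓑𝓐 : 𝓑 ⊆ 𝓐)
    (h𝓑 : IsIntersecting 𝓑) : IsIntersecting (compressSubfamily i j 𝓐 𝓑) := by
  simp only [IsIntersecting, compressSubfamily, forall_mem_image]
  intro X hX Y hY
  by_cases hXs : Shifts i j 𝓐 𝓑 X <;> by_cases hYs : Shifts i j 𝓐 𝓑 Y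
  · rw [shift_of_shifts hXs, shift_of_shifts hYs]
    exact ⟨i, mem_inter.2 ⟨mem_setCompress_of_compressible hXs.2.1,
      mem_setCompress_of_compressible hYs.2.1⟩⟩
  · rw [shift_of_shifts hXs, shift_of_not_shifts hYs]
    exact inter_nonempty_of_shifts_of_not_shifts hij h𝓑𝓐 h𝓑 hXs hY hYs
  · rw [shift_of_not_shifts hXs, shift_of_shifts hYs, inter_comm]
    exact inter_nonempty_of_shifts_of_not_shifts hij h𝓑𝓐 h𝓑 hYs hX hXs
  · rw [shift_of_not_shifts hXs, shift_of_not_shifts hYs]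
    exact h𝓑 X hX Y hY

lemma unshift_shift (hij : i ≠ j) (h𝓑𝓐 : 𝓑 ⊆ 𝓐) (h𝓑 : IsIntersecting 𝓑) (hX : X ∈ 𝓑) :
    unshift i j 𝓐 (compressSubfamily i j 𝓐 𝓑) (shift i j 𝓐 𝓑 X) = X := by
  by_cases hs : Shifts i j 𝓐 𝓑 X
  · have hXc := hs.2.1
    rw [shift_of_shifts hs, unshift, if_pos, uncompress_setCompress hXc]
    refine ⟨mem_setCompress_of_compressible hXc, notMem_setCompress_of_compressible hij hXc, ?_⟩
    rw [uncompress_setCompress hXc, reachesUnpaired_compressSubfamily h𝓑𝓐]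
    exact hs.2.2.imp_right fun h => ⟨h𝓑𝓐 hX, h.2⟩
  · rw [shift_of_not_shifts hs, unshift, if_neg]
    rintro ⟨hi, hj, hXA | ⟨-, hreach⟩⟩
    · exact hXA (h𝓑𝓐 hX)
    · rw [reachesUnpaired_compressSubfamily h𝓑𝓐] at hreach
      refine not_reachesUnpaired_of_setCompress_mem hij h𝓑𝓐 h𝓑
        (compressible_uncompress hij X) ?_ hreach
      rwa [setCompress_uncompress hij hi hj]

lemma card_compressSubfamily (hij : i ≠ j) (h𝓑𝓐 : 𝓑 ⊆ 𝓐) (h𝓑 : IsIntersecting 𝓑) :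
    (compressSubfamily i j 𝓐 𝓑).card = 𝓑.card :=
  card_image_of_injOn fun _ hX _ hY hXY => by
    rw [← unshift_shift hij h𝓑𝓐 h𝓑 hX, ← unshift_shift hij h𝓑𝓐 h𝓑 hY, hXY]

lemma image_unshift_compressSubfamily (hij : i ≠ j) (h𝓑𝓐 : 𝓑 ⊆ 𝓐) (h𝓑 : IsIntersecting 𝓑) :
    (compressSubfamily i j 𝓐 𝓑).image (unshift i j 𝓐 (compressSubfamily i j 𝓐 𝓑)) = 𝓑 := by
  rw [compressSubfamily, image_image]
  conv_rhs => rw [← image_id (s := 𝓑)]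
  exact image_congr fun X hX => unshift_shift hij h𝓑𝓐 h𝓑 hX

lemma compressSubfamily_injOn (hij : i ≠ j) :
    Set.InjOn (compressSubfamily i j 𝓐) {𝓑 | 𝓑 ⊆ 𝓐 ∧ IsIntersecting 𝓑} :=
  fun 𝓑₁ h₁ 𝓑₂ h₂ h => by
    rw [← image_unshift_compressSubfamily hij h₁.1 h₁.2,
      ← image_unshift_compressSubfamily hij h₂.1 h₂.2, h]

end IJ

lemma probInter_le_of_injOn_s5 {𝓐 𝓐' : Finset (Finset ℕ)} {p : ℝ} (hp0 : 0 ≤ p) (hp1 : p ≤ 1)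
    (h𝓐' : 𝓐'.card = 𝓐.card) (f : Finset (Finset ℕ) → Finset (Finset ℕ))
    (hf : ∀ 𝓑 ⊆ 𝓐, IsIntersecting 𝓑 → f 𝓑 ⊆ 𝓐' ∧ IsIntersecting (f 𝓑))
    (hf_card : ∀ 𝓑 ⊆ 𝓐, IsIntersecting 𝓑 → (f 𝓑).card = 𝓑.card)
    (hf_inj : Set.InjOn f {𝓑 | 𝓑 ⊆ 𝓐 ∧ IsIntersecting 𝓑}) :
    probInter p 𝓐 ≤ probInter p 𝓐' := by
  set w : Finset (Finset ℕ) → ℝ := fun 𝓓 => p ^ 𝓓.card * (1 - p) ^ (𝓐'.card - 𝓓.card)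
  have hS : ∀ 𝓑 ∈ 𝓐.powerset.filter IsIntersecting, 𝓑 ⊆ 𝓐 ∧ IsIntersecting 𝓑 := by
    simp
  calc probInter p 𝓐 = ∑ 𝓑 ∈ 𝓐.powerset.filter IsIntersecting, w (f 𝓑) := by
        refine sum_congr rfl fun 𝓑 h𝓑 => ?_
        simp only [w, h𝓐', hf_card 𝓑 (hS 𝓑 h𝓑).1 (hS 𝓑 h𝓑).2]
    _ = ∑ 𝓓 ∈ (𝓐.powerset.filter IsIntersecting).image f, w 𝓓 :=
        (sum_image fun _ h₁ _ h₂ => hf_inj (hS _ h₁) (hS _ h₂)).symm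
    _ ≤ ∑ 𝓓 ∈ 𝓐'.powerset.filter IsIntersecting, w 𝓓 := by
        refine sum_le_sum_of_subset_of_nonneg ?_ fun 𝓓 _ _ => ?_
        · simp only [image_subset_iff, mem_filter, mem_powerset]
          exact fun 𝓑 h𝓑 => hf 𝓑 h𝓑.1 h𝓑.2
        · have : 0 ≤ 1 - p := sub_nonneg.2 hp1
          positivity

theorem stmt5_general (𝓐 : Finset (Finset ℕ))
    (i j : ℕ) (hij : i < j)
    (p : ℝ) (hp0 : 0 < p) (hp1 : p < 1) :
    probInter p 𝓐 ≤ probInter p (famCompress i j 𝓐) :=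
  probInter_le_of_injOn_s5 hp0.le hp1.le (IJ.card_famCompress hij.ne 𝓐) (IJ.compressSubfamily i j 𝓐)
    (fun _ h𝓑𝓐 h𝓑 => ⟨IJ.compressSubfamily_subset_famCompress h𝓑𝓐,
      IJ.isIntersecting_compressSubfamily hij.ne h𝓑𝓐 h𝓑⟩)
    (fun _ h𝓑𝓐 h𝓑 => IJ.card_compressSubfamily hij.ne h𝓑𝓐 h𝓑)
    (IJ.compressSubfamily_injOn hij.ne)

theorem stmt5 (n r : ℕ) (𝓐 : Finset (Finset ℕ)) (h𝓐 : 𝓐 ⊆ uniformFam n r)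
    (i j : ℕ) (hi : 1 ≤ i) (hij : i < j) (hj : j ≤ n)
    (p : ℝ) (hp0 : 0 < p) (hp1 : p < 1) :
    probInter p 𝓐 ≤ probInter p (famCompress i j 𝓐) :=
  stmt5_general 𝓐 i j hij p hp0 hp1
end

section
/- Let $\mathcal{A} \subseteq \mathcal{P}[n]$, let $U \subseteq [n]$ have even order, let $v \in [n] - U$, let $f : U \to U$ be a pairing function, and let $\mathcal{C} = \mathcal{C}_{U,v,f}(\mathcal{A})$. Then there exists an injection $\phi$ from the collection of intersecting subfamilies of $\mathcal{A}$ to the collection of intersecting subfamilies of $\mathcal{C}$ such that $|\phi(\mathcal{B})| = |\mathcal{B}|$ for every intersecting subfamily $\mathcal{B} \subseteq \mathcal{A}$. -/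
open Finset

/-!
Call a member `K` of `𝓑` compressible if `v ∉ K` and `C K ∉ 𝓑`, where `C = C_{U,v,f}`. The
injection compresses the least set `M` of compressible members that contains every `K` with
`C K ∉ 𝓐` (these cannot stay in a subfamily of `𝓒`) and, together with `K`, every compressible `K'`
disjoint from `C K` (these would no longer meet `C K`). For `v ∉ A, B` the pairing gives
`A ∩ C B = ∅ ↔ C A ∩ B = ∅`, which makes `(𝓑 \ M) ∪ C(M)` intersecting; it has the size of `𝓑`
since `C` is injective on sets avoiding `v`, and minimality of `M` lets one read `M`, hence `𝓑`,
off the image.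
-/

lemma IsIntersecting.mono {𝓑 𝓒 : Finset (Finset ℕ)} (h𝓒 : IsIntersecting 𝓒) (h : 𝓑 ⊆ 𝓒) :
    IsIntersecting 𝓑 :=
  fun A hA B hB => h𝓒 A (h hA) B (h hB)

lemma isIntersecting_of_forall_mem {𝓑 : Finset (Finset ℕ)} {x : ℕ} (h : ∀ A ∈ 𝓑, x ∈ A) :
    IsIntersecting 𝓑 :=
  fun A hA B hB => ⟨x, mem_inter.2 ⟨h A hA, h B hB⟩⟩

lemma isIntersecting_union {𝓑 𝓒 : Finset (Finset ℕ)} (h𝓑 : IsIntersecting 𝓑)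
    (h𝓒 : IsIntersecting 𝓒) (h : ∀ B ∈ 𝓑, ∀ C ∈ 𝓒, (B ∩ C).Nonempty) :
    IsIntersecting (𝓑 ∪ 𝓒) := by
  intro A hA B hB
  rcases mem_union.1 hA with hA | hA <;> rcases mem_union.1 hB with hB | hB
  · exact h𝓑 A hA B hB
  · exact h A hA B hB
  · rw [inter_comm]
    exact h B hB A hA
  · exact h𝓒 A hA B hB

lemma IsPairing.injOn {f : ℕ → ℕ} {U : Finset ℕ} (hf : IsPairing f U) : Set.InjOn f U :=
  fun a ha b hb h => by rw [← hf.2.1 a ha, h, hf.2.1 b hb]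

section setUvf

variable {U : Finset ℕ} {v : ℕ} {f : ℕ → ℕ} {A B : Finset ℕ} {x : ℕ}

lemma setUvf_of_mem (h : v ∈ A) : setUvf U v f A = A := if_pos h

lemma setUvf_of_notMem (h : v ∉ A) : setUvf U v f A = (A ∩ U).image f ∪ {v} ∪ (A \ U) :=
  if_neg h

lemma mem_setUvf_self (A : Finset ℕ) : v ∈ setUvf U v f A := by
  unfold setUvf
  split_ifs with h
  · exact h
  · simp

lemma apply_mem_setUvf_iff (hf : IsPairing f U) (hvU : v ∉ U) (hA : v ∉ A) (hx : x ∈ U) :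
    f x ∈ setUvf U v f A ↔ x ∈ A := by
  have hfx := hf.1 x hx
  rw [setUvf_of_notMem hA]
  simp only [mem_union, mem_image, mem_inter, mem_singleton, mem_sdiff]
  constructor
  · rintro ((⟨a, ⟨haA, haU⟩, hax⟩ | hxv) | ⟨-, hxU⟩)
    · rwa [← hf.injOn haU hx hax]
    · exact absurd (hxv ▸ hfx) hvU
    · exact absurd hfx hxU
  · exact fun h => Or.inl (Or.inl ⟨x, ⟨h, hx⟩, rfl⟩)

lemma mem_setUvf_iff_of_notMem (hf : IsPairing f U) (hA : v ∉ A) (hxU : x ∉ U) (hxv : x ≠ v) :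
    x ∈ setUvf U v f A ↔ x ∈ A := by
  rw [setUvf_of_notMem hA]
  simp only [mem_union, mem_image, mem_inter, mem_singleton, mem_sdiff]
  constructor
  · rintro ((⟨a, ⟨-, haU⟩, rfl⟩ | hxv') | ⟨hxA, -⟩)
    · exact absurd (hf.1 a haU) hxU
    · exact absurd hxv' hxv
    · exact hxA
  · exact fun h => Or.inr ⟨h, hxU⟩

lemma setUvf_injOn (hf : IsPairing f U) (hvU : v ∉ U) :
    Set.InjOn (setUvf U v f) {A | v ∉ A} := by
  intro A hA B hB h
  ext x
  by_cases hxv : x = v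
  · subst hxv
    exact iff_of_false hA hB
  by_cases hxU : x ∈ U
  · rw [← apply_mem_setUvf_iff hf hvU hA hxU, ← apply_mem_setUvf_iff hf hvU hB hxU, h]
  · rw [← mem_setUvf_iff_of_notMem hf hA hxU hxv, ← mem_setUvf_iff_of_notMem hf hB hxU hxv, h]

lemma disjoint_setUvf_of_disjoint (hf : IsPairing f U) (hvU : v ∉ U) (hA : v ∉ A) (hB : v ∉ B)
    (h : Disjoint A (setUvf U v f B)) : Disjoint (setUvf U v f A) B := by
  rw [disjoint_left] at h ⊢
  intro x hxA hxB
  by_cases hxU : x ∈ U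
  · rw [← hf.2.1 x hxU, apply_mem_setUvf_iff hf hvU hA (hf.1 x hxU)] at hxA
    exact h hxA ((apply_mem_setUvf_iff hf hvU hB hxU).2 hxB)
  · have hxv : x ≠ v := fun hxv => hB (hxv ▸ hxB)
    exact h ((mem_setUvf_iff_of_notMem hf hA hxU hxv).1 hxA)
      ((mem_setUvf_iff_of_notMem hf hB hxU hxv).2 hxB)

lemma disjoint_setUvf_comm (hf : IsPairing f U) (hvU : v ∉ U) (hA : v ∉ A) (hB : v ∉ B) :
    Disjoint A (setUvf U v f B) ↔ Disjoint (setUvf U v f A) B :=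
  ⟨disjoint_setUvf_of_disjoint hf hvU hA hB,
    fun h => (disjoint_setUvf_of_disjoint hf hvU hB hA h.symm).symm⟩

end setUvf

namespace Uvf

def compressible (U : Finset ℕ) (v : ℕ) (f : ℕ → ℕ) (𝓑 : Finset (Finset ℕ)) :
    Finset (Finset ℕ) :=
  𝓑.filter fun K => v ∉ K ∧ setUvf U v f K ∉ 𝓑

def MoveClosed (𝓐 : Finset (Finset ℕ)) (U : Finset ℕ) (v : ℕ) (f : ℕ → ℕ)
    (𝓑 𝓢 : Finset (Finset ℕ)) : Prop :=
  (∀ K ∈ compressible U v f 𝓑, setUvf U v f K ∉ 𝓐 → K ∈ 𝓢) ∧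
    ∀ K ∈ 𝓢, ∀ K' ∈ compressible U v f 𝓑, Disjoint (setUvf U v f K) K' → K' ∈ 𝓢

open Classical in
noncomputable def moved (𝓐 : Finset (Finset ℕ)) (U : Finset ℕ) (v : ℕ) (f : ℕ → ℕ)
    (𝓑 : Finset (Finset ℕ)) : Finset (Finset ℕ) :=
  (compressible U v f 𝓑).filter fun K =>
    ∀ 𝓢 ⊆ compressible U v f 𝓑, MoveClosed 𝓐 U v f 𝓑 𝓢 → K ∈ 𝓢

noncomputable def shift (𝓐 : Finset (Finset ℕ)) (U : Finset ℕ) (v : ℕ) (f : ℕ → ℕ)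
    (𝓑 : Finset (Finset ℕ)) : Finset (Finset ℕ) :=
  (𝓑 \ moved 𝓐 U v f 𝓑) ∪ (moved 𝓐 U v f 𝓑).image (setUvf U v f)

variable {𝓐 𝓑 𝓑' 𝓢 : Finset (Finset ℕ)} {U : Finset ℕ} {v : ℕ} {f : ℕ → ℕ} {K X : Finset ℕ}

lemma mem_compressible :
    K ∈ compressible U v f 𝓑 ↔ K ∈ 𝓑 ∧ v ∉ K ∧ setUvf U v f K ∉ 𝓑 :=
  mem_filter

lemma mem_moved : K ∈ moved 𝓐 U v f 𝓑 ↔ K ∈ compressible U v f 𝓑 ∧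
    ∀ 𝓢 ⊆ compressible U v f 𝓑, MoveClosed 𝓐 U v f 𝓑 𝓢 → K ∈ 𝓢 := by
  classical exact mem_filter

lemma moved_subset_compressible : moved 𝓐 U v f 𝓑 ⊆ compressible U v f 𝓑 :=
  fun _ hK => (mem_moved.1 hK).1

lemma moved_subset : moved 𝓐 U v f 𝓑 ⊆ 𝓑 :=
  moved_subset_compressible.trans (filter_subset _ _)

lemma notMem_of_mem_moved (hK : K ∈ moved 𝓐 U v f 𝓑) : v ∉ K :=
  (mem_compressible.1 (moved_subset_compressible hK)).2.1

lemma moved_subset_of_moveClosed (h𝓢 : 𝓢 ⊆ compressible U v f 𝓑)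
    (hc : MoveClosed 𝓐 U v f 𝓑 𝓢) : moved 𝓐 U v f 𝓑 ⊆ 𝓢 :=
  fun _ hK => (mem_moved.1 hK).2 𝓢 h𝓢 hc

lemma moveClosed_moved : MoveClosed 𝓐 U v f 𝓑 (moved 𝓐 U v f 𝓑) :=
  ⟨fun K hK hKA => mem_moved.2 ⟨hK, fun _ _ hc => hc.1 K hK hKA⟩,
    fun K hK K' hK' hd =>
      mem_moved.2 ⟨hK', fun 𝓢 h𝓢 hc => hc.2 K ((mem_moved.1 hK).2 𝓢 h𝓢 hc) K' hK' hd⟩⟩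

lemma disjoint_image_moved : Disjoint 𝓑 ((moved 𝓐 U v f 𝓑).image (setUvf U v f)) := by
  rw [disjoint_right]
  rintro _ hX
  obtain ⟨K, hK, rfl⟩ := mem_image.1 hX
  exact (mem_compressible.1 (moved_subset_compressible hK)).2.2

lemma setUvf_mem_of_mem_sdiff_moved (h𝓑 : 𝓑 ⊆ 𝓐) (hX : X ∈ 𝓑 \ moved 𝓐 U v f 𝓑) :
    setUvf U v f X ∈ 𝓐 := by
  obtain ⟨hX, hXM⟩ := mem_sdiff.1 hX
  by_cases hXv : v ∈ X
  · rw [setUvf_of_mem hXv]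
    exact h𝓑 hX
  by_cases hCX : setUvf U v f X ∈ 𝓑
  · exact h𝓑 hCX
  by_contra hCA
  exact hXM (moveClosed_moved.1 X (mem_compressible.2 ⟨hX, hXv, hCX⟩) hCA)

lemma shift_subset_famUvf (h𝓑 : 𝓑 ⊆ 𝓐) : shift 𝓐 U v f 𝓑 ⊆ famUvf U v f 𝓐 := by
  rw [shift, famUvf, union_comm]
  refine union_subset_union (image_subset_image (moved_subset.trans h𝓑)) fun X hX => ?_
  exact mem_filter.2 ⟨h𝓑 (mem_sdiff.1 hX).1, setUvf_mem_of_mem_sdiff_moved h𝓑 hX⟩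

lemma inter_setUvf_nonempty (hf : IsPairing f U) (hvU : v ∉ U) (h𝓑 : IsIntersecting 𝓑)
    (hX : X ∈ 𝓑 \ moved 𝓐 U v f 𝓑) (hK : K ∈ moved 𝓐 U v f 𝓑) :
    (X ∩ setUvf U v f K).Nonempty := by
  obtain ⟨hX, hXM⟩ := mem_sdiff.1 hX
  obtain ⟨hKB, hKv, -⟩ := mem_compressible.1 (moved_subset_compressible hK)
  by_cases hXv : v ∈ X
  · exact ⟨v, mem_inter.2 ⟨hXv, mem_setUvf_self K⟩⟩
  rw [← not_disjoint_iff_nonempty_inter]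
  by_cases hCX : setUvf U v f X ∈ 𝓑
  · rw [disjoint_setUvf_comm hf hvU hXv hKv, not_disjoint_iff_nonempty_inter]
    exact h𝓑 _ hCX _ hKB
  · exact fun hd => hXM (moveClosed_moved.2 K hK X (mem_compressible.2 ⟨hX, hXv, hCX⟩) hd.symm)

lemma isIntersecting_shift (hf : IsPairing f U) (hvU : v ∉ U) (h𝓑 : IsIntersecting 𝓑) :
    IsIntersecting (shift 𝓐 U v f 𝓑) :=
  isIntersecting_union (h𝓑.mono sdiff_subset)
    (isIntersecting_of_forall_mem (forall_mem_image.2 fun K _ => mem_setUvf_self K))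
    fun _ hX => forall_mem_image.2 fun _ hK => inter_setUvf_nonempty hf hvU h𝓑 hX hK

lemma card_shift (hf : IsPairing f U) (hvU : v ∉ U) : (shift 𝓐 U v f 𝓑).card = 𝓑.card := by
  have hinj : Set.InjOn (setUvf U v f) (moved 𝓐 U v f 𝓑) := fun _ hA _ hB =>
    setUvf_injOn hf hvU (notMem_of_mem_moved hA) (notMem_of_mem_moved hB)
  rw [shift, card_union_of_disjoint (disjoint_image_moved.mono_left sdiff_subset),
    card_sdiff_of_subset moved_subset, card_image_of_injOn hinj,
    Nat.sub_add_cancel (card_le_card moved_subset)]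

lemma sdiff_moved_eq :
    𝓑 \ moved 𝓐 U v f 𝓑 = shift 𝓐 U v f 𝓑 \ (moved 𝓐 U v f 𝓑).image (setUvf U v f) := by
  rw [shift, union_sdiff_right, sdiff_eq_self_of_disjoint
    (disjoint_image_moved.mono_left sdiff_subset)]

lemma mem_sdiff_moved_of_mem_shift (hX : X ∈ shift 𝓐 U v f 𝓑) (hXv : v ∉ X) :
    X ∈ 𝓑 \ moved 𝓐 U v f 𝓑 := by
  rcases mem_union.1 hX with hX | hX
  · exact hX
  · obtain ⟨K, -, rfl⟩ := mem_image.1 hX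
    exact absurd (mem_setUvf_self K) hXv

lemma mem_moved_of_setUvf_mem_shift (hf : IsPairing f U) (hvU : v ∉ U) (hKv : v ∉ K)
    (hK : setUvf U v f K ∈ shift 𝓐 U v f 𝓑) (hK' : setUvf U v f K ∉ 𝓑) :
    K ∈ moved 𝓐 U v f 𝓑 := by
  rcases mem_union.1 hK with hK | hK
  · exact absurd (mem_sdiff.1 hK).1 hK'
  · obtain ⟨K₁, hK₁, hK₁K⟩ := mem_image.1 hK
    rwa [← setUvf_injOn hf hvU (notMem_of_mem_moved hK₁) hKv hK₁K]

lemma moved_subset_of_shift_eq (hf : IsPairing f U) (hvU : v ∉ U) (h𝓑' : 𝓑' ⊆ 𝓐)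
    (hint' : IsIntersecting 𝓑') (heq : shift 𝓐 U v f 𝓑 = shift 𝓐 U v f 𝓑') :
    moved 𝓐 U v f 𝓑 ⊆ moved 𝓐 U v f 𝓑' := by
  have hmem : ∀ K ∈ moved 𝓐 U v f 𝓑, setUvf U v f K ∉ 𝓑' → K ∈ moved 𝓐 U v f 𝓑' :=
    fun K hK => mem_moved_of_setUvf_mem_shift hf hvU (notMem_of_mem_moved hK)
      (heq ▸ mem_union_right _ (mem_image_of_mem _ hK))
  suffices h : moved 𝓐 U v f 𝓑 ⊆ compressible U v f 𝓑 ∩ moved 𝓐 U v f 𝓑' from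
    h.trans inter_subset_right
  refine moved_subset_of_moveClosed inter_subset_left ⟨fun K hK hKA => ?_, fun K hK K' hK' hd => ?_⟩
  · exact mem_inter.2 ⟨hK, hmem K (moveClosed_moved.1 K hK hKA) fun h => hKA (h𝓑' h)⟩
  obtain ⟨hK'B, hK'v, -⟩ := mem_compressible.1 hK'
  have hKM' := (mem_inter.1 hK).2
  have hKv := notMem_of_mem_moved hKM'
  have hCK' : setUvf U v f K' ∉ 𝓑' := fun h =>
    not_disjoint_iff_nonempty_inter.2 (hint' K (moved_subset hKM') _ h)
      ((disjoint_setUvf_comm hf hvU hKv hK'v).2 hd)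
  have hK'M : K' ∈ moved 𝓐 U v f 𝓑 := by
    by_contra hK'M
    have hK'shift : K' ∈ shift 𝓐 U v f 𝓑' := heq ▸ mem_union_left _ (mem_sdiff.2 ⟨hK'B, hK'M⟩)
    obtain ⟨hK'B', hK'M'⟩ := mem_sdiff.1 (mem_sdiff_moved_of_mem_shift hK'shift hK'v)
    exact hK'M' (moveClosed_moved.2 K hKM' K' (mem_compressible.2 ⟨hK'B', hK'v, hCK'⟩) hd)
  exact mem_inter.2 ⟨hK', hmem K' hK'M hCK'⟩

lemma shift_injOn (hf : IsPairing f U) (hvU : v ∉ U) :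
    Set.InjOn (shift 𝓐 U v f) ↑(𝓐.powerset.filter IsIntersecting) := by
  intro 𝓑 h𝓑 𝓑' h𝓑' heq
  rw [mem_coe, mem_filter, mem_powerset] at h𝓑 h𝓑'
  have hM : moved 𝓐 U v f 𝓑 = moved 𝓐 U v f 𝓑' :=
    (moved_subset_of_shift_eq hf hvU h𝓑'.1 h𝓑'.2 heq).antisymm
      (moved_subset_of_shift_eq hf hvU h𝓑.1 h𝓑.2 heq.symm)
  calc 𝓑 = (𝓑 \ moved 𝓐 U v f 𝓑) ∪ moved 𝓐 U v f 𝓑 := (sdiff_union_of_subset moved_subset).symm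
    _ = (𝓑' \ moved 𝓐 U v f 𝓑') ∪ moved 𝓐 U v f 𝓑' := by
      rw [sdiff_moved_eq, sdiff_moved_eq, heq, hM]
    _ = 𝓑' := sdiff_union_of_subset moved_subset

end Uvf

theorem stmt7_general (𝓐 : Finset (Finset ℕ)) (U : Finset ℕ) (v : ℕ) (hvU : v ∉ U)
    (f : ℕ → ℕ) (hf : IsPairing f U) :
    ∃ φ : Finset (Finset ℕ) → Finset (Finset ℕ),
      Set.InjOn φ ↑(𝓐.powerset.filter IsIntersecting) ∧
      ∀ 𝓑 ∈ 𝓐.powerset.filter IsIntersecting,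
        φ 𝓑 ∈ (famUvf U v f 𝓐).powerset.filter IsIntersecting ∧
        (φ 𝓑).card = 𝓑.card := by
  refine ⟨Uvf.shift 𝓐 U v f, Uvf.shift_injOn hf hvU, fun 𝓑 h𝓑 => ?_⟩
  rw [mem_filter, mem_powerset] at h𝓑
  exact ⟨mem_filter.2 ⟨mem_powerset.2 (Uvf.shift_subset_famUvf h𝓑.1),
    Uvf.isIntersecting_shift hf hvU h𝓑.2⟩, Uvf.card_shift hf hvU⟩

theorem stmt7 (n : ℕ) (𝓐 : Finset (Finset ℕ)) (h𝓐 : 𝓐 ⊆ (Finset.Icc 1 n).powerset)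
    (U : Finset ℕ) (hU : U ⊆ Finset.Icc 1 n) (hUeven : Even U.card)
    (v : ℕ) (hv : v ∈ Finset.Icc 1 n) (hvU : v ∉ U)
    (f : ℕ → ℕ) (hf : IsPairing f U) :
    ∃ φ : Finset (Finset ℕ) → Finset (Finset ℕ),
      Set.InjOn φ ↑(𝓐.powerset.filter IsIntersecting) ∧
      ∀ 𝓑 ∈ 𝓐.powerset.filter IsIntersecting,
        φ 𝓑 ∈ (famUvf U v f 𝓐).powerset.filter IsIntersecting ∧
        (φ 𝓑).card = 𝓑.card :=
  stmt7_general 𝓐 U v hvU f hf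
end
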